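/- arXiv:1108.4192 — 7 statements merged into one kernel-verified Lean document; each statement's English description precedes it below -/
import Mathlib

section
/- Let Γ be a countably infinite group and f ∈ ℝΓ well-balanced, and define μ ∈ ℝΓ by μ_e = 0 and μ_s = −f_s/f_e for s ≠ e. Assume Σ_{k=0}^∞ ‖μ^k‖_∞ < ∞. Then the function ω : Γ → ℝ given by ω_s = f_e^{-1} Σ_{k=0}^∞ (μ^k)_s is well defined (the series converges absolutely for each s), ω_s > 0 for every s ∈ Γ, ω tends to 0 along the cofinite filter on Γ (i.e. ω ∈ C₀(Γ)), and ω is a formal two-sided inverse of f: for every w ∈ Γ, Σ_{s ∈ supp f} f_s ω_{s⁻¹w} = Σ_{s ∈ supp f} ω_{ws⁻¹} f_s = 1 if w = e and 0 otherwise. -/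
open Filter Topology
open scoped Classical

noncomputable section

/-- `f ∈ ℝΓ` is well-balanced: finitely supported, coefficients sum to `0`,
nonpositive off the identity, symmetric, and with support generating `Γ`. -/
def WellBalancedR {G : Type*} [Group G] (f : G → ℝ) : Prop :=
  (Function.support f).Finite ∧ (∑ᶠ s : G, f s) = 0 ∧
    (∀ s : G, s ≠ 1 → f s ≤ 0) ∧ (∀ s : G, f s⁻¹ = f s) ∧
    Subgroup.closure (Function.support f) = ⊤

/-- Convolution `(uv)_w = ∑_s u_s v_{s⁻¹ w}` in `ℝΓ`. -/
def convR {G : Type*} [Group G] (u v : G → ℝ) : G → ℝ :=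
  fun w => ∑ᶠ s : G, u s * v (s⁻¹ * w)

/-- Convolution powers `u^k` in `ℝΓ`, with `u^0 = δ_e`. -/
def convPow {G : Type*} [Group G] (u : G → ℝ) : ℕ → G → ℝ
  | 0 => fun s => if s = 1 then 1 else 0
  | k + 1 => convR u (convPow u k)

/-- `μ ∈ ℝΓ` associated to a well-balanced `f`: `μ_e = 0`, `μ_s = -f_s/f_e` for `s ≠ e`. -/
def muOf {G : Type*} [Group G] (f : G → ℝ) : G → ℝ :=
  fun s => if s = 1 then 0 else -(f s) / f 1

/-- `ω_s = f_e⁻¹ ∑_{k≥0} (μ^k)_s`. -/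
def omegaOf {G : Type*} [Group G] (f : G → ℝ) : G → ℝ :=
  fun s => (f 1)⁻¹ * ∑' k : ℕ, convPow (muOf f) k s

section Aux

open scoped Pointwise

variable {G : Type*} [Group G] {u v : G → ℝ}

lemma convR_eq_sum (u v : G → ℝ) {F : Finset G} (hF : Function.support u ⊆ F) (w : G) :
    convR u v w = ∑ s ∈ F, u s * v (s⁻¹ * w) :=
  finsum_eq_sum_of_support_subset _ (fun s hs => hF (left_ne_zero_of_mul hs))

lemma support_convR_subset (u v : G → ℝ) :
    Function.support (convR u v) ⊆ Function.support u * Function.support v := by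
  intro x hx
  by_contra hx'
  apply hx
  apply finsum_eq_zero_of_forall_eq_zero
  intro s
  by_cases hus : u s = 0
  · simp [hus]
  by_cases hvs : v (s⁻¹ * x) = 0
  · simp [hvs]
  exact absurd ⟨s, hus, s⁻¹ * x, hvs, by group⟩ hx'

lemma support_convR_finite (hu : (Function.support u).Finite) (hv : (Function.support v).Finite) :
    (Function.support (convR u v)).Finite :=
  (hu.mul hv).subset (support_convR_subset u v)

lemma convR_delta (u v : G → ℝ) : convR u (convPow v 0) = u := by
  ext w
  rw [convR]
  rw [finsum_eq_single _ w (fun s hs => by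
    simp only [convPow]
    rw [if_neg (fun h => hs (by rwa [inv_mul_eq_one] at h)), mul_zero])]
  simp [convPow]

lemma delta_convR (u v : G → ℝ) : convR (convPow v 0) u = u := by
  ext w
  rw [convR]
  rw [finsum_eq_single _ 1 (fun s hs => by simp only [convPow]; rw [if_neg hs, zero_mul])]
  simp [convPow]

lemma convR_assoc (hu : (Function.support u).Finite) (hv : (Function.support v).Finite)
    (w : G → ℝ) : convR (convR u v) w = convR u (convR v w) := by
  ext x
  set A := hu.toFinset with hA
  set B := hv.toFinset with hBdef
  have hAs : Function.support u ⊆ (A : Set G) := by simp [hA]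
  have hBs : Function.support v ⊆ (B : Set G) := by simp [hBdef]
  have hC : Function.support (convR u v) ⊆ ((A * B : Finset G) : Set G) := by
    refine (support_convR_subset u v).trans ?_
    rw [Finset.coe_mul]
    exact Set.mul_subset_mul hAs hBs
  rw [convR_eq_sum (convR u v) w hC x, convR_eq_sum u (convR v w) hAs x]
  calc ∑ p ∈ A * B, convR u v p * w (p⁻¹ * x)
      = ∑ p ∈ A * B, ∑ s ∈ A, u s * v (s⁻¹ * p) * w (p⁻¹ * x) := by
        refine Finset.sum_congr rfl fun p _ => ?_
        rw [convR_eq_sum u v hAs p, Finset.sum_mul]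
    _ = ∑ s ∈ A, ∑ p ∈ A * B, u s * v (s⁻¹ * p) * w (p⁻¹ * x) := Finset.sum_comm
    _ = ∑ s ∈ A, u s * convR v w (s⁻¹ * x) := by
        refine Finset.sum_congr rfl fun s hs => ?_
        have hsu : u s ≠ 0 := by simpa [hA] using hs
        have hsupp : Function.support (fun p => v (s⁻¹ * p) * w (p⁻¹ * x))
            ⊆ ((A * B : Finset G) : Set G) := by
          intro p hp
          have hv0 : v (s⁻¹ * p) ≠ 0 := left_ne_zero_of_mul hp
          have hpm : s⁻¹ * p ∈ B := hBs hv0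
          have : p = s * (s⁻¹ * p) := by group
          rw [this]
          exact_mod_cast Finset.mul_mem_mul (by simpa [hA] using hsu) hpm
        have h2 : ∑ p ∈ A * B, v (s⁻¹ * p) * w (p⁻¹ * x)
            = ∑ᶠ p, v (s⁻¹ * p) * w (p⁻¹ * x) :=
          (finsum_eq_sum_of_support_subset _ hsupp).symm
        simp only [mul_assoc, ← Finset.mul_sum]
        rw [h2]
        congr 1
        rw [convR, ← finsum_comp_equiv (Equiv.mulLeft s)
          (f := fun p => v (s⁻¹ * p) * w (p⁻¹ * x))]
        refine finsum_congr fun t => ?_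
        simp [mul_assoc]

lemma support_convPow_finite (hu : (Function.support u).Finite) (k : ℕ) :
    (Function.support (convPow u k)).Finite := by
  induction k with
  | zero =>
    refine (Set.finite_singleton (1 : G)).subset ?_
    intro s hs
    simp only [convPow, Function.mem_support, ne_eq, ite_eq_right_iff] at hs
    by_contra h
    exact hs (fun h1 => absurd h1 (by simpa using h)) |>.elim
  | succ k ih => exact support_convR_finite hu ih

lemma convPow_one' (u : G → ℝ) : convPow u 1 = u := convR_delta u u

lemma convPow_add (hu : (Function.support u).Finite) (m n : ℕ) :
    convPow u (m + n) = convR (convPow u m) (convPow u n) := by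
  induction m with
  | zero => rw [Nat.zero_add, delta_convR]
  | succ m ih =>
    have : m + 1 + n = (m + n) + 1 := by omega
    rw [this]
    show convR u (convPow u (m + n)) = _
    rw [ih, ← convR_assoc hu (support_convPow_finite hu m)]
    rfl

lemma convPow_succ' (hu : (Function.support u).Finite) (k : ℕ) :
    convPow u (k + 1) = convR (convPow u k) u := by
  rw [convPow_add hu k 1, convPow_one']

lemma convR_nonneg (h0u : ∀ s, 0 ≤ u s) (h0v : ∀ s, 0 ≤ v s) (w : G) : 0 ≤ convR u v w :=
  finsum_nonneg fun s => mul_nonneg (h0u s) (h0v _)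

lemma convPow_nonneg (h0u : ∀ s, 0 ≤ u s) (k : ℕ) (s : G) : 0 ≤ convPow u k s := by
  induction k generalizing s with
  | zero => simp only [convPow]; positivity
  | succ k ih => exact convR_nonneg h0u (fun t => ih t) s

lemma le_convR (hu : (Function.support u).Finite) (h0u : ∀ s, 0 ≤ u s) (h0v : ∀ s, 0 ≤ v s)
    (t w : G) : u t * v (t⁻¹ * w) ≤ convR u v w := by
  by_cases h : u t = 0
  · rw [h, zero_mul]; exact convR_nonneg h0u h0v w
  rw [convR_eq_sum u v (by simp : Function.support u ⊆ hu.toFinset) w]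
  exact Finset.single_le_sum (f := fun s => u s * v (s⁻¹ * w))
    (fun s _ => mul_nonneg (h0u s) (h0v _)) (hu.mem_toFinset.2 h)

lemma convR_swap (hus : ∀ s : G, u s⁻¹ = u s) (hvs : ∀ s : G, v s⁻¹ = v s) (x : G) :
    convR u v x⁻¹ = convR v u x := by
  rw [convR, convR, ← finsum_comp_equiv (Equiv.mulLeft x⁻¹)
    (f := fun t => u t * v (t⁻¹ * x⁻¹))]
  refine finsum_congr fun r => ?_
  have h1 : (Equiv.mulLeft x⁻¹) r = x⁻¹ * r := rfl
  rw [h1]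
  have h2 : u (x⁻¹ * r) = u (r⁻¹ * x) := by rw [← hus]; group
  have h3 : (x⁻¹ * r)⁻¹ * x⁻¹ = r⁻¹ := by group
  rw [h2, h3, hvs, mul_comm]

lemma convPow_symm (hu : (Function.support u).Finite) (hus : ∀ s : G, u s⁻¹ = u s) (k : ℕ) :
    ∀ s : G, convPow u k s⁻¹ = convPow u k s := by
  induction k with
  | zero => intro s; simp only [convPow, inv_eq_one]
  | succ k ih =>
    intro s
    show convR u (convPow u k) s⁻¹ = convR u (convPow u k) s
    rw [convR_swap hus ih, ← convPow_succ' hu]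
    rfl

lemma tsum_telescope' (a : ℕ → ℝ) (ha : Summable a) :
    ∑' k : ℕ, (a k - a (k + 1)) = a 0 := by
  have hsub : Summable (fun k => a k - a (k + 1)) :=
    ha.sub ((summable_nat_add_iff 1).2 ha)
  have hlim : Tendsto (fun n => ∑ i ∈ Finset.range n, (a i - a (i + 1))) atTop (𝓝 (a 0)) := by
    have heq : ∀ n, ∑ i ∈ Finset.range n, (a i - a (i + 1)) = a 0 - a n :=
      fun n => Finset.sum_range_sub' a n
    simp only [heq]
    simpa using tendsto_const_nhds.sub ha.tendsto_atTop_zero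
  exact (hsub.hasSum_iff_tendsto_nat.2 hlim).tsum_eq

end Aux

set_option maxHeartbeats 2000000 in
theorem stmt3 {G : Type*} [Group G] [Countable G] [Infinite G]
    (f : G → ℝ) (hf : WellBalancedR f)
    (hsum : Summable (fun k : ℕ => ⨆ s : G, |convPow (muOf f) k s|)) :
    (∀ s : G, Summable (fun k : ℕ => |convPow (muOf f) k s|)) ∧
    (∀ s : G, 0 < omegaOf f s) ∧
    Tendsto (omegaOf f) cofinite (𝓝 0) ∧
    (∀ w : G, (∑ᶠ s : G, f s * omegaOf f (s⁻¹ * w)) = if w = 1 then 1 else 0) ∧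
    (∀ w : G, (∑ᶠ s : G, omegaOf f (w * s⁻¹) * f s) = if w = 1 then 1 else 0) := by
  obtain ⟨hfin, hsum0, hnonpos, hsymm, hgen⟩ := hf
  set μ := muOf f with hμdef
  -- f 1 > 0
  have hf1 : 0 < f 1 := by
    by_contra h
    push_neg at h
    have hall : ∀ s, f s ≤ 0 := by
      intro s
      by_cases hs : s = 1
      · rwa [hs]
      · exact hnonpos s hs
    have hzero : ∀ s, f s = 0 := by
      have hsum' : ∑ s ∈ hfin.toFinset, f s = 0 := by
        rw [← finsum_eq_sum f hfin]; exact hsum0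
      intro s
      by_cases hs : f s = 0
      · exact hs
      · exact (Finset.sum_eq_zero_iff_of_nonpos (fun i _ => hall i)).1 hsum' s
          (hfin.mem_toFinset.2 hs)
    have hse : Function.support f = ∅ := by
      ext s; simp [hzero]
    rw [hse, Subgroup.closure_empty] at hgen
    obtain ⟨x, hx⟩ := exists_ne (1 : G)
    exact hx (Subgroup.mem_bot.1 (hgen ▸ Subgroup.mem_top x))
  have hf1ne : f 1 ≠ 0 := hf1.ne'
  -- basic facts about μ
  have hμsupp : Function.support μ ⊆ Function.support f := by
    intro s hs
    simp only [hμdef, muOf, Function.mem_support, ne_eq] at hs ⊢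
    intro hfs
    apply hs
    by_cases h1 : s = 1 <;> simp [h1, hfs]
  have hμfin : (Function.support μ).Finite := hfin.subset hμsupp
  have hμ0 : ∀ s, 0 ≤ μ s := by
    intro s
    simp only [hμdef, muOf]
    by_cases h1 : s = 1
    · simp [h1]
    · rw [if_neg h1]
      exact div_nonneg (neg_nonneg.2 (hnonpos s h1)) hf1.le
  have hμsymm : ∀ s : G, μ s⁻¹ = μ s := by
    intro s
    simp only [hμdef, muOf, inv_eq_one]
    rw [hsymm]
  -- key: (f 1)⁻¹ * f s = δ_s - μ s
  have hkey : ∀ s : G, (f 1)⁻¹ * f s = (if s = 1 then (1:ℝ) else 0) - μ s := by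
    intro s
    simp only [hμdef, muOf]
    by_cases h1 : s = 1
    · simp [h1, inv_mul_cancel₀ hf1ne]
    · rw [if_neg h1, if_neg h1, zero_sub, neg_div, neg_neg, div_eq_inv_mul]
  -- bound by sup
  have hbdd : ∀ k : ℕ, BddAbove (Set.range fun t => |convPow μ k t|) := by
    intro k
    apply Set.Finite.bddAbove
    refine Set.Finite.subset (Set.Finite.insert 0
      (((support_convPow_finite hμfin k).image (fun t => |convPow μ k t|)))) ?_
    rintro _ ⟨t, rfl⟩
    by_cases ht : convPow μ k t = 0
    · simp [ht]
    · exact Set.mem_insert_of_mem _ ⟨t, ht, rfl⟩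
  have hB : ∀ (k : ℕ) (s : G), |convPow μ k s| ≤ ⨆ t : G, |convPow μ k t| :=
    fun k s => le_ciSup (hbdd k) s
  -- Part 1
  have part1 : ∀ s : G, Summable (fun k : ℕ => |convPow μ k s|) := fun s =>
    Summable.of_nonneg_of_le (fun k => abs_nonneg _) (fun k => hB k s) hsum
  have part1' : ∀ s : G, Summable (fun k : ℕ => convPow μ k s) := fun s =>
    summable_abs_iff.mp (part1 s)
  -- Part 2
  have hclos : Subgroup.closure (Function.support μ) = ⊤ := by
    have hsub : Function.support f ⊆ Function.support μ ∪ {1} := by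
      intro s hs
      by_cases h1 : s = 1
      · exact Or.inr (by simp [h1])
      · refine Or.inl ?_
        simp only [hμdef, muOf, Function.mem_support, ne_eq, if_neg h1]
        exact div_ne_zero (neg_ne_zero.2 hs) hf1ne
    refine top_unique ?_
    calc (⊤ : Subgroup G) = Subgroup.closure (Function.support f) := hgen.symm
      _ ≤ Subgroup.closure (Function.support μ ∪ {1}) := Subgroup.closure_mono hsub
      _ = Subgroup.closure (Function.support μ) ⊔ Subgroup.closure {1} :=
          Subgroup.closure_union _ _
      _ = Subgroup.closure (Function.support μ) := by
          rw [Subgroup.closure_singleton_one, sup_bot_eq]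
  have hpos : ∀ s : G, ∃ n : ℕ, 0 < convPow μ n s := by
    intro s
    have hs : s ∈ Subgroup.closure (Function.support μ) := hclos ▸ Subgroup.mem_top s
    induction hs using Subgroup.closure_induction with
    | mem x hx =>
      exact ⟨1, by rw [convPow_one']; exact lt_of_le_of_ne (hμ0 x) (Ne.symm hx)⟩
    | one => exact ⟨0, by simp [convPow]⟩
    | mul x y hx hy ihx ihy =>
      obtain ⟨m, hm⟩ := ihx
      obtain ⟨n, hn⟩ := ihy
      refine ⟨m + n, ?_⟩
      rw [convPow_add hμfin m n]
      calc (0:ℝ) < convPow μ m x * convPow μ n y := mul_pos hm hn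
        _ = convPow μ m x * convPow μ n (x⁻¹ * (x * y)) := by rw [inv_mul_cancel_left]
        _ ≤ convR (convPow μ m) (convPow μ n) (x * y) :=
            le_convR (support_convPow_finite hμfin m) (convPow_nonneg hμ0 m)
              (convPow_nonneg hμ0 n) x (x * y)
    | inv x hx ihx =>
      obtain ⟨n, hn⟩ := ihx
      exact ⟨n, by rwa [convPow_symm hμfin hμsymm n]⟩
  have part2 : ∀ s : G, 0 < omegaOf f s := by
    intro s
    obtain ⟨n, hn⟩ := hpos s
    have hts : 0 < ∑' k : ℕ, convPow μ k s :=
      lt_of_lt_of_le hn (Summable.le_tsum (part1' s) n (fun i _ => convPow_nonneg hμ0 i s))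
    exact mul_pos (inv_pos.2 hf1) hts
  -- Part 3
  have part3 : Tendsto (omegaOf f) cofinite (𝓝 0) := by
    rw [Metric.tendsto_nhds]
    intro ε hε
    rw [eventually_cofinite]
    have htail : Tendsto (fun N : ℕ => ∑' k : ℕ, (fun j => ⨆ t : G, |convPow μ j t|) (k + N))
        atTop (𝓝 0) := tendsto_sum_nat_add (fun j => ⨆ t : G, |convPow μ j t|)
    obtain ⟨N, hN⟩ : ∃ N : ℕ, ∑' k : ℕ, (⨆ t : G, |convPow μ (k + N) t|) < ε * f 1 :=
      (htail.eventually (gt_mem_nhds (mul_pos hε hf1))).exists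
    have hSfin : (⋃ k ∈ Finset.range N, Function.support (convPow μ k)).Finite :=
      (Finset.range N).finite_toSet.biUnion (fun k _ => support_convPow_finite hμfin k)
    refine hSfin.subset ?_
    intro s hs
    simp only [Set.mem_setOf_eq] at hs
    by_contra hsS
    apply hs
    have hzero : ∀ k < N, convPow μ k s = 0 := by
      intro k hk
      by_contra h0
      exact hsS (Set.mem_biUnion (Finset.mem_range.2 hk) h0)
    have hsplit : ∑' k : ℕ, convPow μ k s = ∑' k : ℕ, convPow μ (k + N) s := by
      rw [← Summable.sum_add_tsum_nat_add N (part1' s),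
        Finset.sum_eq_zero (fun k hk => hzero k (Finset.mem_range.1 hk)), zero_add]
    have hle : ∑' k : ℕ, convPow μ (k + N) s ≤ ∑' k : ℕ, ⨆ t : G, |convPow μ (k + N) t| := by
      refine Summable.tsum_le_tsum (fun k => ?_) ((summable_nat_add_iff N).2 (part1' s))
        ((summable_nat_add_iff N).2 hsum)
      exact (le_abs_self _).trans (hB (k + N) s)
    have hnn : 0 ≤ ∑' k : ℕ, convPow μ k s := tsum_nonneg (fun k => convPow_nonneg hμ0 k s)
    have homega_nn : (0:ℝ) ≤ omegaOf f s := mul_nonneg (inv_pos.2 hf1).le hnn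
    rw [dist_zero_right, Real.norm_eq_abs, abs_of_nonneg homega_nn]
    show (f 1)⁻¹ * ∑' k : ℕ, convPow μ k s < ε
    calc (f 1)⁻¹ * ∑' k : ℕ, convPow μ k s
        = (f 1)⁻¹ * ∑' k : ℕ, convPow μ (k + N) s := by rw [hsplit]
      _ ≤ (f 1)⁻¹ * ∑' k : ℕ, ⨆ t : G, |convPow μ (k + N) t| :=
          mul_le_mul_of_nonneg_left hle (inv_pos.2 hf1).le
      _ < (f 1)⁻¹ * (ε * f 1) := mul_lt_mul_of_pos_left hN (inv_pos.2 hf1)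
      _ = ε := by field_simp
  -- telescoping
  have htel : ∀ w : G,
      ∑' k : ℕ, (convPow μ k w - convPow μ (k + 1) w) = if w = 1 then (1:ℝ) else 0 := by
    intro w
    rw [tsum_telescope' _ (part1' w)]
    rfl
  have h1F : (1 : G) ∈ hfin.toFinset := hfin.mem_toFinset.2 hf1ne
  -- Part 4
  have part4 : ∀ w : G, (∑ᶠ s : G, f s * omegaOf f (s⁻¹ * w)) = if w = 1 then 1 else 0 := by
    intro w
    have hsupp4 : Function.support (fun s => f s * omegaOf f (s⁻¹ * w))
        ⊆ (hfin.toFinset : Set G) := by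
      rw [Set.Finite.coe_toFinset]
      exact fun s hs => left_ne_zero_of_mul hs
    rw [finsum_eq_sum_of_support_subset _ hsupp4]
    have hterm : ∀ s : G, f s * omegaOf f (s⁻¹ * w)
        = ∑' k : ℕ, ((f 1)⁻¹ * f s) * convPow μ k (s⁻¹ * w) := by
      intro s
      rw [tsum_mul_left]
      simp only [omegaOf, ← hμdef]
      ring
    calc ∑ s ∈ hfin.toFinset, f s * omegaOf f (s⁻¹ * w)
        = ∑ s ∈ hfin.toFinset, ∑' k : ℕ, ((f 1)⁻¹ * f s) * convPow μ k (s⁻¹ * w) :=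
          Finset.sum_congr rfl (fun s _ => hterm s)
      _ = ∑' k : ℕ, ∑ s ∈ hfin.toFinset, ((f 1)⁻¹ * f s) * convPow μ k (s⁻¹ * w) :=
          (Summable.tsum_finsetSum (fun s _ => (part1' (s⁻¹ * w)).mul_left _)).symm
      _ = ∑' k : ℕ, (convPow μ k w - convPow μ (k + 1) w) := by
          refine tsum_congr fun k => ?_
          have h1 : ∀ s ∈ hfin.toFinset, ((f 1)⁻¹ * f s) * convPow μ k (s⁻¹ * w)
              = (if s = 1 then (1:ℝ) else 0) * convPow μ k (s⁻¹ * w)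
                - μ s * convPow μ k (s⁻¹ * w) := by
            intro s _
            rw [hkey s]; ring
          rw [Finset.sum_congr rfl h1, Finset.sum_sub_distrib]
          congr 1
          · simp only [ite_mul, one_mul, zero_mul]
            rw [Finset.sum_ite_eq' hfin.toFinset (1 : G)
              (fun s => convPow μ k (s⁻¹ * w)), if_pos h1F, inv_one, one_mul]
          · have hμF : Function.support μ ⊆ (hfin.toFinset : Set G) := by
              rw [Set.Finite.coe_toFinset]; exact hμsupp
            rw [← convR_eq_sum μ (convPow μ k) hμF w]
            rfl
      _ = if w = 1 then 1 else 0 := htel w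
  -- Part 5
  have part5 : ∀ w : G, (∑ᶠ s : G, omegaOf f (w * s⁻¹) * f s) = if w = 1 then 1 else 0 := by
    intro w
    have hsupp5 : Function.support (fun s => omegaOf f (w * s⁻¹) * f s)
        ⊆ (hfin.toFinset : Set G) := by
      rw [Set.Finite.coe_toFinset]
      exact fun s hs => right_ne_zero_of_mul hs
    rw [finsum_eq_sum_of_support_subset _ hsupp5]
    have hterm : ∀ s : G, omegaOf f (w * s⁻¹) * f s
        = ∑' k : ℕ, convPow μ k (w * s⁻¹) * ((f 1)⁻¹ * f s) := by
      intro s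
      rw [tsum_mul_right]
      simp only [omegaOf, ← hμdef]
      ring
    calc ∑ s ∈ hfin.toFinset, omegaOf f (w * s⁻¹) * f s
        = ∑ s ∈ hfin.toFinset, ∑' k : ℕ, convPow μ k (w * s⁻¹) * ((f 1)⁻¹ * f s) :=
          Finset.sum_congr rfl (fun s _ => hterm s)
      _ = ∑' k : ℕ, ∑ s ∈ hfin.toFinset, convPow μ k (w * s⁻¹) * ((f 1)⁻¹ * f s) :=
          (Summable.tsum_finsetSum (fun s _ => (part1' (w * s⁻¹)).mul_right _)).symm
      _ = ∑' k : ℕ, (convPow μ k w - convPow μ (k + 1) w) := by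
          refine tsum_congr fun k => ?_
          have h1 : ∀ s ∈ hfin.toFinset, convPow μ k (w * s⁻¹) * ((f 1)⁻¹ * f s)
              = convPow μ k (w * s⁻¹) * (if s = 1 then (1:ℝ) else 0)
                - convPow μ k (w * s⁻¹) * μ s := by
            intro s _
            rw [hkey s]; ring
          rw [Finset.sum_congr rfl h1, Finset.sum_sub_distrib]
          congr 1
          · simp only [mul_ite, mul_one, mul_zero]
            rw [Finset.sum_ite_eq' hfin.toFinset (1 : G)
              (fun s => convPow μ k (w * s⁻¹)), if_pos h1F, inv_one, mul_one]
          · have hsupp' : Function.support (fun s => convPow μ k (w * s⁻¹) * μ s)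
                ⊆ (hfin.toFinset : Set G) := by
              rw [Set.Finite.coe_toFinset]
              exact fun s hs => hμsupp (right_ne_zero_of_mul hs)
            rw [← finsum_eq_sum_of_support_subset _ hsupp']
            have hre : ∑ᶠ s : G, convPow μ k (w * s⁻¹) * μ s
                = convR (convPow μ k) μ w := by
              rw [convR, ← finsum_comp_equiv ((Equiv.inv G).trans (Equiv.mulRight w))
                (f := fun s => convPow μ k (w * s⁻¹) * μ s)]
              refine finsum_congr fun t => ?_
              simp only [Equiv.trans_apply, Equiv.inv_apply, Equiv.coe_mulRight]
              have e1 : w * (t⁻¹ * w)⁻¹ = t := by group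
              rw [e1]
            rw [hre, ← convPow_succ' hμfin]
      _ = if w = 1 then 1 else 0 := htel w
  exact ⟨part1, part2, part3, part4, part5⟩
end
end

section
/- Let Γ be a countable group, f, g ∈ ℤΓ, and N a finite-index normal subgroup of Γ with quotient map π : ℤΓ → ℤ(Γ/N). Then Σ_{s∈Γ} g_s·x_s = 0 in ℝ/ℤ for every x ∈ Fix_N(X_f) if and only if π(g) ∈ ℤ(Γ/N)·π(f), i.e. π(g) = h·π(f) for some h in the integral group ring ℤ(Γ/N). -/
open Filter Topology
open scoped Classical

noncomputable section

/-- `X_f = {x ∈ (ℝ/ℤ)^Γ : ∀ t, ∑_s f_s · x_{ts} = 0}`. -/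
def XfSet {G : Type*} [Group G] (f : G → ℤ) : Set (G → UnitAddCircle) :=
  {x | ∀ t : G, (∑ᶠ s : G, f s • x (t * s)) = 0}

/-- `Fix_N(X_f) = {x ∈ X_f : x_{γt} = x_t for all γ ∈ N, t ∈ Γ}`. -/
def fixSet {G : Type*} [Group G] (f : G → ℤ) (N : Subgroup G) :
    Set (G → UnitAddCircle) :=
  {x | x ∈ XfSet f ∧ ∀ γ ∈ N, ∀ t : G, x (γ * t) = x t}

/-- The ring homomorphism `π : ℤΓ → ℤ(Γ/N)`, `π(g)_c = ∑_{sN = c} g_s`. -/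
def quotPush {G : Type*} [Group G] (N : Subgroup G) (g : G → ℤ) : (G ⧸ N) → ℤ :=
  fun c => ∑ᶠ s : G, if (QuotientGroup.mk s : G ⧸ N) = c then g s else 0

/-!
A point of `Fix_N(X_f)` is constant on cosets of `N`, so it is a function `y` on the finite
group `Q = Γ/N` satisfying the equations of `π(f)`, and `∑ g_s x_s = ∑ π(g)_c y_c`. The functions
`y : Q → ℝ/ℤ` are the characters of `ℤQ = ℤ^Q`, and those satisfying the equations of `π(f)` are
exactly the characters vanishing on the left ideal `ℤQ·π(f)`. Characters into `ℚ/ℤ ⊆ ℝ/ℤ`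
separate the points of `ℤQ / ℤQ·π(f)`, so `π(g)` lies in that ideal iff every such character
kills it.
-/

def ratCircleToUnitAddCircle : AddCircle (1 : ℚ) →+ UnitAddCircle :=
  QuotientAddGroup.map _ _ (Rat.castHom ℝ).toAddMonoidHom fun x hx => by
    obtain ⟨k, rfl⟩ := AddSubgroup.mem_zmultiples_iff.mp hx
    exact AddSubgroup.mem_zmultiples_iff.mpr ⟨k, by simp⟩

theorem ratCircleToUnitAddCircle_injective : Function.Injective ratCircleToUnitAddCircle := by
  refine (injective_iff_map_eq_zero _).mpr fun z hz => ?_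
  induction z using QuotientAddGroup.induction_on with
  | H x =>
    obtain ⟨k, hk⟩ := (AddCircle.coe_eq_zero_iff (1 : ℝ)).mp hz
    refine (AddCircle.coe_eq_zero_iff (1 : ℚ)).mpr ⟨k, ?_⟩
    have : ((k : ℚ) : ℝ) = (x : ℝ) := by simpa using hk
    simpa using (by exact_mod_cast this : (k : ℚ) = x)

theorem Submodule.mem_iff_forall_unitAddCircle {A : Type*} [AddCommGroup A]
    (M : Submodule ℤ A) (v : A) :
    v ∈ M ↔ ∀ χ : A →ₗ[ℤ] UnitAddCircle, M ≤ LinearMap.ker χ → χ v = 0 := by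
  refine ⟨fun hv χ hχ => hχ hv, fun H => ?_⟩
  by_contra hv
  obtain ⟨c, hc⟩ := CharacterModule.exists_character_apply_ne_zero_of_ne_zero
    ((Submodule.Quotient.mk_eq_zero M).not.mpr hv)
  refine hc (ratCircleToUnitAddCircle_injective ?_)
  rw [map_zero]
  exact H ((ratCircleToUnitAddCircle.comp c).toIntLinearMap ∘ₗ M.mkQ)
    fun m hm => by simp [(Submodule.Quotient.mk_eq_zero M).mpr hm]

section FiniteGroup

variable {Q : Type*} [Group Q] [Fintype Q]

theorem exists_convolution_eq_iff_mem_span (F H : Q → ℤ) :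
    (∃ h : Q → ℤ, ∀ a, H a = ∑ c, h (a * c⁻¹) * F c) ↔
      H ∈ Submodule.span ℤ (Set.range fun t a => F (t⁻¹ * a)) := by
  have hreindex : ∀ (h : Q → ℤ) a, ∑ t, h t * F (t⁻¹ * a) = ∑ c, h (a * c⁻¹) * F c :=
    fun h a => Fintype.sum_equiv ((Equiv.inv Q).trans (Equiv.mulRight a)) _ _ fun t => by simp
  rw [Submodule.mem_span_range_iff_exists_fun]
  simp only [funext_iff, Finset.sum_apply, Pi.smul_apply, smul_eq_mul, hreindex, eq_comm]

theorem sum_comp_inv_mul_smul {M : Type*} [AddCommGroup M] (F : Q → ℤ) (y : Q → M) (t : Q) :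
    ∑ a, F (t⁻¹ * a) • y a = ∑ c, F c • y (t * c) :=
  (Fintype.sum_equiv (Equiv.mulLeft t) _ _ fun c => by simp).symm

theorem forall_sum_smul_eq_zero_iff_exists_convolution (F H : Q → ℤ) :
    (∀ y : Q → UnitAddCircle, (∀ t, ∑ c, F c • y (t * c) = 0) → ∑ c, H c • y c = 0) ↔
      ∃ h : Q → ℤ, ∀ a, H a = ∑ c, h (a * c⁻¹) * F c := by
  simp only [exists_convolution_eq_iff_mem_span, Submodule.mem_iff_forall_unitAddCircle,
    Submodule.span_le, Set.range_subset_iff, SetLike.mem_coe, LinearMap.mem_ker]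
  constructor
  · intro hy χ hχ
    set y : Q → UnitAddCircle := fun a => χ fun j => if a = j then 1 else 0
    have hχ_eq : ∀ w, χ w = ∑ a, w a • y a := LinearMap.pi_apply_eq_sum_univ χ
    rw [hχ_eq]
    refine hy y fun t => ?_
    rw [← sum_comp_inv_mul_smul, ← hχ_eq]
    exact hχ t
  · intro hχ y hy
    simpa [Fintype.linearCombination_apply, sum_comp_inv_mul_smul, hy] using
      hχ (Fintype.linearCombination ℤ y)

end FiniteGroup

section Quotient

variable {G : Type*} [Group G] (N : Subgroup G)

theorem finsum_smul_comp_mk_eq_sum_quotPush [Fintype (G ⧸ N)] {M : Type*} [AddCommGroup M]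
    {g : G → ℤ} (hg : g.support.Finite) (k : G ⧸ N → M) :
    ∑ᶠ s, g s • k (s : G ⧸ N) = ∑ c, quotPush N g c • k c := by
  have hpush : ∀ c, quotPush N g c = ∑ s ∈ hg.toFinset, if (s : G ⧸ N) = c then g s else 0 :=
    fun c => finsum_eq_sum_of_support_subset _ fun s hs => by
      simp only [Function.mem_support, ne_eq, ite_eq_right_iff, not_forall] at hs
      simpa using hs.2
  rw [finsum_eq_sum_of_support_subset (s := hg.toFinset) _ fun s hs => by
    simpa using Function.support_smul_subset_left g _ hs]
  simp only [hpush, Finset.sum_smul, ite_smul, zero_smul]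
  rw [Finset.sum_comm]
  simp

theorem exists_eq_comp_mk_of_forall_mul_eq [N.Normal] {M : Type*} {x : G → M}
    (hx : ∀ γ ∈ N, ∀ t, x (γ * t) = x t) : ∃ y : G ⧸ N → M, x = y ∘ (↑) :=
  ⟨Quotient.lift x fun a b hab => by
    -- `b = γ * a` with `γ = a * (a⁻¹ * b) * a⁻¹ ∈ N`
    have hconj := ‹N.Normal›.conj_mem _ (QuotientGroup.leftRel_apply.mp hab) a
    rw [← hx _ hconj a]
    simp [mul_assoc], rfl⟩

variable {N} [N.Normal] [Fintype (G ⧸ N)] {f : G → ℤ} (hf : f.support.Finite)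
include hf

theorem comp_mk_mem_fixSet_iff (y : G ⧸ N → UnitAddCircle) :
    y ∘ (↑) ∈ fixSet f N ↔ ∀ t : G ⧸ N, ∑ c, quotPush N f c • y (t * c) = 0 := by
  have hinv : ∀ γ ∈ N, ∀ t : G, (y ∘ (↑)) (γ * t) = (y ∘ (↑)) t := fun γ hγ t => by
    simp [(QuotientGroup.eq_one_iff γ).mpr hγ]
  change (_ ∧ _) ↔ _
  rw [and_iff_left hinv, QuotientGroup.forall_mk]
  refine forall_congr' fun t => ?_
  rw [← finsum_smul_comp_mk_eq_sum_quotPush N hf]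
  simp

theorem forall_mem_fixSet_iff {g : G → ℤ} (hg : g.support.Finite) :
    (∀ x ∈ fixSet f N, ∑ᶠ s, g s • x s = 0) ↔ ∀ y : G ⧸ N → UnitAddCircle,
      (∀ t, ∑ c, quotPush N f c • y (t * c) = 0) → ∑ c, quotPush N g c • y c = 0 := by
  constructor
  · intro H y hy
    rw [← finsum_smul_comp_mk_eq_sum_quotPush N hg]
    exact H _ ((comp_mk_mem_fixSet_iff hf y).mpr hy)
  · intro H x hx
    obtain ⟨y, rfl⟩ := exists_eq_comp_mk_of_forall_mul_eq N hx.2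
    rw [Function.comp_def, finsum_smul_comp_mk_eq_sum_quotPush N hg]
    exact H y ((comp_mk_mem_fixSet_iff hf y).mp hx)

theorem finsum_comp_mul_inv_mul_eq_sum_quotPush (h : G ⧸ N → ℤ) (a : G) :
    ∑ᶠ s, h (a * s⁻¹ : G) * f s = ∑ c, h (a * c⁻¹) * quotPush N f c := by
  simpa [mul_comm] using finsum_smul_comp_mk_eq_sum_quotPush N hf fun c => h (a * c⁻¹)

end Quotient

/-- The convolution `h·π(f)` is written at a coset `aN` as `∑_{s∈Γ} h(as⁻¹N)·f_s`. -/
theorem stmt10_general {G : Type*} [Group G]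
    (f g : G → ℤ) (hf : (Function.support f).Finite)
    (hg : (Function.support g).Finite)
    (N : Subgroup G) [N.Normal] [N.FiniteIndex] :
    (∀ x ∈ fixSet f N, (∑ᶠ s : G, g s • x s) = 0) ↔
      ∃ h : (G ⧸ N) → ℤ, ∀ a : G,
        quotPush N g (QuotientGroup.mk a) =
          ∑ᶠ s : G, h (QuotientGroup.mk (a * s⁻¹)) * f s := by
  have : Fintype (G ⧸ N) := Fintype.ofFinite _
  rw [forall_mem_fixSet_iff hf hg, forall_sum_smul_eq_zero_iff_exists_convolution]
  simp only [finsum_comp_mul_inv_mul_eq_sum_quotPush hf, QuotientGroup.forall_mk]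

/-- `∑_s g_s·x_s = 0` for every `x ∈ Fix_N(X_f)` iff `π(g) ∈ ℤ(Γ/N)·π(f)`.
(The convolution `h·π(f)` is written at a coset `aN` as `∑_{s∈Γ} h(as⁻¹N)·f_s`.) -/
theorem stmt10 {G : Type*} [Group G] [Countable G]
    (f g : G → ℤ) (hf : (Function.support f).Finite)
    (hg : (Function.support g).Finite)
    (N : Subgroup G) [N.Normal] [N.FiniteIndex] :
    (∀ x ∈ fixSet f N, (∑ᶠ s : G, g s • x s) = 0) ↔
      ∃ h : (G ⧸ N) → ℤ, ∀ a : G,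
        quotPush N g (QuotientGroup.mk a) =
          ∑ᶠ s : G, h (QuotientGroup.mk (a * s⁻¹)) * f s :=
  stmt10_general f g hf hg N
end
end

section
/- Let Γ be a finitely generated infinite group, S ⊆ Γ \ {e} a finite symmetric generating set, and (Γ_n)_{n≥1} a sequence of finite-index normal subgroups of Γ with ⋂_{n≥1} ⋃_{i≥n} Γ_i = {e}; let π_n : Γ → Γ/Γ_n be the quotient maps. Then for every finite subset A ⊆ Γ there exists a finite subset B ⊆ Γ containing A such that for all sufficiently large n, the set (Γ/Γ_n) \ π_n(B) is nonempty and the subgraph of the Cayley graph C(Γ/Γ_n, π_n(S)) induced on (Γ/Γ_n) \ π_n(B) is connected. -/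
/-!
Enlarge `A` to a finite connected set `B ∋ 1` by adding to a finite connected `W ⊇ A` all the
finite components of `Γ ∖ W`. Every component of `Γ ∖ B` is then infinite, so from each point of
`BB⁻¹ ∖ B` some path in `Γ ∖ B` leaves `BB⁻¹`. Once `π_n` is injective on the finitely many points
involved, every vertex `u` outside `P = π_n(B)` is joined outside `P` to a vertex `q` with
`qP ∩ P = ∅`.

In a finite group this forces `Pᶜ` to be connected. Let `D(x)` be the component of `x` in `Pᶜ`,
pick `u₀` with `|D(u₀)|` minimal and `q ∈ D(u₀)` as above, so that `qP ⊆ D(u₀)`. The component of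
`1` in the complement of `qP` is the translate `q D(q⁻¹)`, and it contains `P` together with every
component of `Pᶜ` missing `qP`. Counting shows that `D(q⁻¹)` meets `qP`, hence equals `D(u₀)`, and
then any other component would be smaller than `D(u₀)`.
-/

open Filter Function Relation Pointwise SimpleGraph

/-- The Cayley graph of `Γ/N` with respect to the image of a symmetric generating set
`S ⊆ Γ \ {e}`: distinct cosets `u, v` are adjacent iff `u⁻¹v` lies in the image of `S`. -/
def cayleyQuot {G : Type*} [Group G] (N : Subgroup G) (S : Finset G) :
    SimpleGraph (G ⧸ N) :=
  SimpleGraph.fromRel (fun u v =>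
    ∃ a : G, ∃ s ∈ S, (QuotientGroup.mk a : G ⧸ N) = u ∧
      (QuotientGroup.mk (a * s) : G ⧸ N) = v)

section ReachWithin

variable {V : Type*} (𝒢 : SimpleGraph V)

def ReachWithin (s : Set V) : V → V → Prop :=
  ReflTransGen fun a b => 𝒢.Adj a b ∧ a ∈ s ∧ b ∈ s

def reachSet (s : Set V) (u : V) : Set V := {w | ReachWithin 𝒢 s u w}

variable {𝒢} {s t : Set V} {a b c : V}

namespace ReachWithin

lemma refl : ReachWithin 𝒢 s a a := ReflTransGen.refl

lemma trans (hab : ReachWithin 𝒢 s a b) (hbc : ReachWithin 𝒢 s b c) : ReachWithin 𝒢 s a c :=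
  ReflTransGen.trans hab hbc

lemma symm (h : ReachWithin 𝒢 s a b) : ReachWithin 𝒢 s b a :=
by
  induction h with
  | refl => exact refl
  | tail _ hbc ih => exact ReflTransGen.head ⟨hbc.1.symm, hbc.2.2, hbc.2.1⟩ ih

lemma tail (hab : ReachWithin 𝒢 s a b) (hbc : 𝒢.Adj b c) (hb : b ∈ s) (hc : c ∈ s) :
    ReachWithin 𝒢 s a c :=
  ReflTransGen.tail hab ⟨hbc, hb, hc⟩

lemma mem (h : ReachWithin 𝒢 s a b) (ha : a ∈ s) : b ∈ s := by
  induction h with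
  | refl => exact ha
  | tail _ hbc _ => exact hbc.2.2

lemma mono (h : ReachWithin 𝒢 s a b) (hst : s ⊆ t) : ReachWithin 𝒢 t a b :=
  ReflTransGen.mono (fun _ _ h => ⟨h.1, hst h.2.1, hst h.2.2⟩) _ _ h

lemma of_reachSet_subset (h : ReachWithin 𝒢 s a b) (ht : reachSet 𝒢 s a ⊆ t) :
    ReachWithin 𝒢 t a b := by
  induction h with
  | refl => exact refl
  | tail hab hbc ih =>
    exact ih.tail hbc.1 (ht hab) (ht (ReflTransGen.tail hab hbc))

lemma map {V' : Type*} {𝒢' : SimpleGraph V'} {t : Set V'} (f : V → V')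
    (hf : ∀ a b, 𝒢.Adj a b → f a = f b ∨ 𝒢'.Adj (f a) (f b)) (hst : Set.MapsTo f s t)
    (h : ReachWithin 𝒢 s a b) : ReachWithin 𝒢' t (f a) (f b) :=
  ReflTransGen.lift' f (fun a b ⟨hab, ha, hb⟩ => (hf a b hab).elim
    (fun e => by simp only [onFun, e]; exact ReflTransGen.refl)
    (fun h => ReflTransGen.single ⟨h, hst ha, hst hb⟩)) _ _ h

lemma exists_finite (h : ReachWithin 𝒢 s a b) (ha : a ∈ s) :
    ∃ F ⊆ s, F.Finite ∧ a ∈ F ∧ ReachWithin 𝒢 F a b := by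
  induction h with
  | refl => exact ⟨{a}, by simpa, Set.finite_singleton a, rfl, refl⟩
  | @tail b c _ hbc ih =>
    obtain ⟨F, hFs, hF, haF, hab⟩ := ih
    refine ⟨insert c F, Set.insert_subset hbc.2.2 hFs, hF.insert c, Set.mem_insert_of_mem c haF, ?_⟩
    exact (hab.mono (Set.subset_insert c F)).tail hbc.1 (Set.mem_insert_of_mem c (hab.mem haF))
      (Set.mem_insert c F)

lemma reachable_induce (h : ReachWithin 𝒢 s a b) (ha : a ∈ s) (hb : b ∈ s) :
    (𝒢.induce s).Reachable ⟨a, ha⟩ ⟨b, hb⟩ := by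
  induction h with
  | refl => rfl
  | tail _ hbc ih => exact (ih hbc.2.1).trans (Adj.reachable (comap_adj.mpr hbc.1))

end ReachWithin

lemma reachSet_eq (h : ReachWithin 𝒢 s a b) : reachSet 𝒢 s a = reachSet 𝒢 s b :=
  Set.ext fun _ => ⟨h.symm.trans, h.trans⟩

lemma reachSet_subset (ha : a ∈ s) : reachSet 𝒢 s a ⊆ s := fun _ h => ReachWithin.mem h ha

lemma SimpleGraph.Reachable.reachWithin_univ (h : 𝒢.Reachable a b) :
    ReachWithin 𝒢 Set.univ a b :=
  ReflTransGen.mono (fun _ _ h => ⟨h, trivial, trivial⟩) _ _ ((reachable_iff_reflTransGen a b).1 h)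

lemma SimpleGraph.Reachable.exists_adj_notMem (h : 𝒢.Reachable a b) (ha : a ∈ s) (hb : b ∉ s) :
    ∃ x y, ReachWithin 𝒢 s a x ∧ y ∉ s ∧ 𝒢.Adj x y := by
  rw [reachable_iff_reflTransGen] at h
  induction h using ReflTransGen.head_induction_on with
  | refl => exact absurd ha hb
  | @head a c hac _ ih =>
    by_cases hc : c ∈ s
    · obtain ⟨x, y, hcx, hy, hxy⟩ := ih hc
      exact ⟨x, y, ReflTransGen.head ⟨hac, ha, hc⟩ hcx, hy, hxy⟩
    · exact ⟨a, c, ReachWithin.refl, hc, hac⟩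

lemma induce_connected_of_reachWithin (hs : s.Nonempty)
    (h : ∀ u ∈ s, ∀ v ∈ s, ReachWithin 𝒢 s u v) : (𝒢.induce s).Connected := by
  have := hs.to_subtype
  exact ⟨fun ⟨u, hu⟩ ⟨v, hv⟩ => (h u hu v hv).reachable_induce hu hv⟩

end ReachWithin

section FillFinite

variable {V : Type*} {𝒢 : SimpleGraph V} {W : Set V} {x₀ : V}

lemma exists_finite_reachWithin_superset (hconn : 𝒢.Preconnected) (x₀ : V) {A : Set V}
    (hA : A.Finite) : ∃ W : Set V, W.Finite ∧ A ⊆ W ∧ x₀ ∈ W ∧ ∀ w ∈ W, ReachWithin 𝒢 W x₀ w := by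
  choose F _ hF hx₀F hreach using fun a (_ : a ∈ A) =>
    (hconn x₀ a).reachWithin_univ.exists_finite (Set.mem_univ x₀)
  set W := insert x₀ (⋃ a, ⋃ ha : a ∈ A, reachSet 𝒢 (F a ha) x₀)
  have hsub : ∀ a ha, reachSet 𝒢 (F a ha) x₀ ⊆ W := fun a ha =>
    (Set.subset_iUnion₂ (s := fun a ha => reachSet 𝒢 (F a ha) x₀) a ha).trans
      (Set.subset_insert _ _)
  refine ⟨W, ?_, fun a ha => hsub a ha (hreach a ha), Set.mem_insert _ _, ?_⟩
  · exact (hA.biUnion' fun a ha => (hF a ha).subset (reachSet_subset (hx₀F a ha))).insert x₀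
  · rintro w (rfl | hw)
    · exact .refl
    · obtain ⟨a, ha, hw⟩ := Set.mem_iUnion₂.1 hw
      exact ReachWithin.of_reachSet_subset hw (hsub a ha)

variable (𝒢) in
def fillFinite (W : Set V) : Set V := W ∪ {g | (reachSet 𝒢 Wᶜ g).Finite}

lemma finite_fillFinite (hconn : 𝒢.Preconnected) (hloc : ∀ v, (𝒢.neighborSet v).Finite)
    (hW : W.Finite) (hW₀ : W.Nonempty) : (fillFinite 𝒢 W).Finite := by
  obtain ⟨y₀, hy₀⟩ := hW₀
  set E := {x | x ∈ ⋃ y ∈ W, 𝒢.neighborSet y ∧ (reachSet 𝒢 Wᶜ x).Finite}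
  have hE : E.Finite := (hW.biUnion fun y _ => hloc y).subset fun x hx => hx.1
  refine (hW.union (hE.biUnion fun x hx => hx.2)).subset ?_
  rintro g (hg | hg)
  · exact Or.inl hg
  by_cases hgW : g ∈ W
  · exact Or.inl hgW
  obtain ⟨x, y, hgx, hy, hxy⟩ := (hconn g y₀).exists_adj_notMem (s := Wᶜ) hgW (not_not.2 hy₀)
  exact Or.inr (Set.mem_biUnion (x := x)
    ⟨Set.mem_biUnion (not_not.1 hy) hxy.symm, reachSet_eq hgx ▸ hg⟩ hgx.symm)

lemma reachWithin_fillFinite (hconn : 𝒢.Preconnected) (hx₀ : x₀ ∈ W)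
    (hW : ∀ w ∈ W, ReachWithin 𝒢 W x₀ w) :
    ∀ b ∈ fillFinite 𝒢 W, ReachWithin 𝒢 (fillFinite 𝒢 W) x₀ b := by
  have hWF : W ⊆ fillFinite 𝒢 W := Set.subset_union_left
  rintro b (hb | hb)
  · exact (hW b hb).mono hWF
  by_cases hbW : b ∈ W
  · exact (hW b hbW).mono hWF
  obtain ⟨x, y, hbx, hy, hxy⟩ := (hconn b x₀).exists_adj_notMem (s := Wᶜ) hbW (not_not.2 hx₀)
  have hy : y ∈ W := not_not.1 hy
  have hcomp : reachSet 𝒢 Wᶜ b ⊆ fillFinite 𝒢 W := fun c hc =>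
    Or.inr (show (reachSet 𝒢 Wᶜ c).Finite from reachSet_eq hc ▸ hb)
  exact (((hW y hy).mono hWF).tail hxy.symm (hWF hy) (hcomp hbx)).trans
    (hbx.of_reachSet_subset hcomp).symm

lemma infinite_reachSet_compl_fillFinite {z : V} (hz : z ∉ fillFinite 𝒢 W) :
    (reachSet 𝒢 (fillFinite 𝒢 W)ᶜ z).Infinite := by
  simp only [fillFinite, Set.mem_union, Set.mem_ofPred_eq, not_or] at hz
  refine Set.Infinite.mono (fun c hc => ReachWithin.of_reachSet_subset hc fun d hd => ?_) hz.2
  rintro (hdW | hdfin)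
  · exact reachSet_subset hz.1 hd hdW
  · exact hz.2 (reachSet_eq hd ▸ hdfin)

lemma exists_finite_reachWithin_notMem {s Z E : Set V} (hZ : Z.Finite) (hZs : Z ⊆ s)
    (hE : E.Finite) (hinf : ∀ z ∈ Z, (reachSet 𝒢 s z).Infinite) :
    ∃ F ⊆ s, F.Finite ∧ Z ⊆ F ∧ ∀ z ∈ Z, ∃ w ∉ E, ReachWithin 𝒢 F z w := by
  have : ∀ z ∈ Z, ∃ F ⊆ s, F.Finite ∧ z ∈ F ∧ ∃ w ∉ E, ReachWithin 𝒢 F z w := by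
    intro z hz
    obtain ⟨w, hw, hwE⟩ := (hinf z hz).exists_notMem_finite hE
    obtain ⟨F, hFs, hF, hzF, hzw⟩ := ReachWithin.exists_finite hw (hZs hz)
    exact ⟨F, hFs, hF, hzF, w, hwE, hzw⟩
  choose F hFs hF hzF hesc using this
  refine ⟨⋃ z, ⋃ hz, F z hz, Set.iUnion₂_subset hFs, hZ.biUnion' hF,
    fun z hz => Set.mem_iUnion₂.2 ⟨z, hz, hzF z hz⟩, fun z hz => ?_⟩
  obtain ⟨w, hwE, hzw⟩ := hesc z hz
  exact ⟨w, hwE, hzw.mono (Set.subset_iUnion₂ (s := fun z hz => F z hz) z hz)⟩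

end FillFinite

section Cayley

variable {G : Type*} [Group G] {S : Set G}

lemma mulCayley_reachable_one_of_mem_closure {g : G} (hg : g ∈ Subgroup.closure S) :
    (mulCayley S).Reachable 1 g := by
  have step : ∀ x y : G, (∃ s ∈ S, x * s = y ∨ x = y * s) → (mulCayley S).Reachable x y :=
    fun x y h => by
      by_cases hxy : x = y
      · exact hxy ▸ .rfl
      · exact Adj.reachable ((mulCayley_adj' S x y).2 ⟨hxy, h⟩)
  induction hg using Subgroup.closure_induction_right with
  | one => rfl
  | mul_right x _ s hs ih => exact ih.trans (step _ _ ⟨s, hs, Or.inl rfl⟩)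
  | mul_inv_cancel x _ s hs ih => exact ih.trans (step _ _ ⟨s, hs, Or.inr (by group)⟩)

lemma mulCayley_preconnected (hS : Subgroup.closure S = ⊤) : (mulCayley S).Preconnected :=
  fun u v => (mulCayley_reachable_one_of_mem_closure (hS ▸ Subgroup.mem_top u)).symm.trans
    (mulCayley_reachable_one_of_mem_closure (hS ▸ Subgroup.mem_top v))

lemma mulCayley_neighborSet_finite (hS : S.Finite) (u : G) :
    ((mulCayley S).neighborSet u).Finite := by
  refine ((hS.smul_set (a := u)).union (hS.inv.smul_set (a := u))).subset fun v hv => ?_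
  rcases ((mulCayley_adj S u v).1 hv).2 with h | h
  · exact Or.inl ⟨_, h, mul_inv_cancel_left u v⟩
  · exact Or.inr ⟨_, by simpa using h, mul_inv_cancel_left u v⟩

lemma ReachWithin.smul {P : Set G} {a b : G} (h : ReachWithin (mulCayley S) P a b) (q : G) :
    ReachWithin (mulCayley S) (q • P) (q * a) (q * b) :=
  h.map (q * ·) (fun _ _ hab => Or.inr (mulCayley_adj_mul_iff_right.2 hab))
    fun _ hx => Set.smul_mem_smul_set hx

lemma reachSet_smul (q : G) (P : Set G) (a : G) :
    reachSet (mulCayley S) (q • P) (q * a) = q • reachSet (mulCayley S) P a := by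
  ext w
  rw [Set.mem_smul_set_iff_inv_smul_mem]
  constructor
  · intro h
    simpa [reachSet] using ReachWithin.smul h q⁻¹
  · intro h
    simpa [reachSet] using ReachWithin.smul h q

lemma mulCayley_map_adj {H : Type*} [Group H] (φ : G →* H) {a b : G}
    (h : (mulCayley S).Adj a b) : φ a = φ b ∨ (mulCayley (φ '' S)).Adj (φ a) (φ b) := by
  by_cases hab : φ a = φ b
  · exact Or.inl hab
  obtain ⟨-, s, hs, h⟩ := (mulCayley_adj' S a b).1 h
  exact Or.inr ((mulCayley_adj' _ _ _).2
    ⟨hab, φ s, ⟨s, hs, rfl⟩, by rcases h with rfl | rfl <;> simp⟩)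

lemma cayleyQuot_eq_mulCayley (N : Subgroup G) [N.Normal] (S : Finset G) :
    cayleyQuot N S = mulCayley (QuotientGroup.mk' N '' S) := by
  have h : ∀ u v : G ⧸ N, (∃ a : G, ∃ s ∈ S, (a : G ⧸ N) = u ∧ ((a * s : G) : G ⧸ N) = v) ↔
      ∃ g ∈ QuotientGroup.mk' N '' S, u * g = v := by
    intro u v
    constructor
    · rintro ⟨a, s, hs, rfl, rfl⟩
      exact ⟨s, ⟨s, hs, rfl⟩, rfl⟩
    · rintro ⟨_, ⟨s, hs, rfl⟩, rfl⟩
      obtain ⟨a, rfl⟩ := QuotientGroup.mk_surjective u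
      exact ⟨a, s, hs, rfl, rfl⟩
  ext u v
  simp only [cayleyQuot, mulCayley, fromRel_adj, h]

end Cayley

section Translates

variable {Q : Type*} [Group Q] {T P : Set Q} {q : Q}

lemma smul_subset_reachSet_compl (hP : ∀ p ∈ P, ReachWithin (mulCayley T) P 1 p)
    (hqP : Disjoint (q • P) P) {u : Q} (huq : ReachWithin (mulCayley T) Pᶜ u q) :
    q • P ⊆ reachSet (mulCayley T) Pᶜ u := by
  rintro _ ⟨p, hp, rfl⟩
  have h := ((hP p hp).smul q).mono hqP.subset_compl_right
  rw [mul_one] at h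
  exact huq.trans h

lemma ncard_reachSet_lt [Finite Q] (hT : (mulCayley T).Preconnected) (h1P : 1 ∈ P)
    (hP : ∀ p ∈ P, ReachWithin (mulCayley T) P 1 p) (hqP : Disjoint (q • P) P) {z : Q}
    (hz : z ∉ P) (hzq : Disjoint (reachSet (mulCayley T) Pᶜ z) (q • P)) :
    (reachSet (mulCayley T) Pᶜ z).ncard < (reachSet (mulCayley T) Pᶜ q⁻¹).ncard := by
  set D := reachSet (mulCayley T) Pᶜ z
  set A := reachSet (mulCayley T) (q • P)ᶜ 1
  have hA : A = q • reachSet (mulCayley T) Pᶜ q⁻¹ := by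
    rw [← reachSet_smul, Set.smul_set_compl, mul_inv_cancel]
  have hPA : P ⊆ A := fun p hp => (hP p hp).mono hqP.subset_compl_left
  have hDA : D ⊆ A := by
    obtain ⟨x, y, hzx, hy, hxy⟩ := (hT z 1).exists_adj_notMem (s := Pᶜ) hz (not_not.2 h1P)
    have hy : y ∈ P := not_not.1 hy
    have hDT : D ⊆ (q • P)ᶜ := hzq.subset_compl_right
    intro c hc
    refine ((hPA hy).tail hxy.symm (hqP.subset_compl_left hy) (hDT hzx)).trans ?_
    exact (hzx.symm.trans hc).of_reachSet_subset (reachSet_eq hzx ▸ hDT)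
  have hPD : Disjoint P D := Set.disjoint_left.2 fun p hp hpD => reachSet_subset hz hpD hp
  calc D.ncard < P.ncard + D.ncard :=
        Nat.lt_add_of_pos_left ((Set.ncard_pos (Set.toFinite P)).2 ⟨1, h1P⟩)
    _ = (P ∪ D).ncard := (Set.ncard_union_eq hPD).symm
    _ ≤ A.ncard := Set.ncard_le_ncard (Set.union_subset hPA hDA)
    _ = _ := by rw [hA, Set.ncard_smul_set]

theorem reachWithin_compl_of_disjoint_smul [Finite Q] (hT : (mulCayley T).Preconnected)
    (h1P : 1 ∈ P) (hP : ∀ p ∈ P, ReachWithin (mulCayley T) P 1 p)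
    (hdeep : ∀ u ∉ P, ∃ q, ReachWithin (mulCayley T) Pᶜ u q ∧ Disjoint (q • P) P)
    {u v : Q} (hu : u ∉ P) (hv : v ∉ P) : ReachWithin (mulCayley T) Pᶜ u v := by
  set D := reachSet (mulCayley T) Pᶜ
  obtain ⟨u₀, hu₀, hmin⟩ :=
    Set.exists_min_image Pᶜ (fun x => (D x).ncard) (Set.toFinite _) ⟨u, hu⟩
  suffices h : ∀ w ∉ P, ReachWithin (mulCayley T) Pᶜ u₀ w from (h u hu).symm.trans (h v hv)
  intro w hw
  by_contra hw₀
  obtain ⟨q, hu₀q, hqP⟩ := hdeep u₀ hu₀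
  have hTD := smul_subset_reachSet_compl hP hqP hu₀q
  have hq : q⁻¹ ∉ P := fun h => Set.disjoint_left.1 hqP ⟨q⁻¹, h, mul_inv_cancel q⟩ h1P
  obtain ⟨c, hc, hcT⟩ := Set.not_disjoint_iff.1 fun h =>
    (ncard_reachSet_lt hT h1P hP hqP hq h).false
  have hD : D q⁻¹ = D u₀ := (reachSet_eq hc).trans (reachSet_eq (hTD hcT)).symm
  refine (hmin w hw).not_gt ((ncard_reachSet_lt hT h1P hP hqP hw ?_).trans_eq (congrArg _ hD))
  exact Set.disjoint_left.2 fun c hc hcT => hw₀ ((hTD hcT).trans hc.symm)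

end Translates

section Projection

variable {G Q : Type*} [Group G] [Group Q] {S : Set G} {φ : G →* Q} {B F : Set G}

lemma notMem_image_of_injOn (hinj : Set.InjOn φ ((F ∪ B) * B)) (h1B : 1 ∈ B) {g : G}
    (hgF : g ∈ F) (hgB : g ∉ B) : φ g ∉ φ '' B := by
  rintro ⟨b, hb, he⟩
  have hsub : F ∪ B ⊆ (F ∪ B) * B := fun x hx => by simpa using Set.mul_mem_mul hx h1B
  exact hgB (hinj (hsub (Or.inr hb)) (hsub (Or.inl hgF)) he ▸ hb)

lemma exists_reachWithin_disjoint_smul_image (hinj : Set.InjOn φ ((F ∪ B) * B)) (h1B : 1 ∈ B)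
    (hFB : F ⊆ Bᶜ)
    (hesc : ∀ z ∈ (B * B⁻¹) \ B, z ∈ F ∧ ∃ w ∉ B * B⁻¹, ReachWithin (mulCayley S) F z w)
    {u : Q} (hu : u ∉ φ '' B) :
    ∃ q, ReachWithin (mulCayley (φ '' S)) (φ '' B)ᶜ u q ∧ Disjoint (q • φ '' B) (φ '' B) := by
  by_cases hd : Disjoint (u • φ '' B) (φ '' B)
  · exact ⟨u, .refl, hd⟩
  obtain ⟨_, ⟨_, ⟨b, hb, rfl⟩, rfl⟩, b', hb', hbb'⟩ := Set.not_disjoint_iff.1 hd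
  have hu' : u = φ (b' * b⁻¹) := by
    simp [hbb']
  have hz : b' * b⁻¹ ∈ (B * B⁻¹) \ B :=
    ⟨Set.mul_mem_mul hb' (Set.inv_mem_inv.2 hb), fun h => hu (hu' ▸ ⟨_, h, rfl⟩)⟩
  obtain ⟨hzF, w, hw, hzw⟩ := hesc _ hz
  have hwF : w ∈ F := hzw.mem hzF
  refine ⟨φ w, hu' ▸ hzw.map φ (fun _ _ => mulCayley_map_adj φ)
    fun x hx => notMem_image_of_injOn hinj h1B hx (hFB hx), Set.disjoint_left.2 ?_⟩
  rintro _ ⟨_, ⟨b₂, hb₂, rfl⟩, rfl⟩ ⟨b₃, hb₃, he⟩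
  have hb₃w : b₃ = w * b₂ := hinj (mul_one b₃ ▸ Set.mul_mem_mul (Set.mem_union_right F hb₃) h1B)
    (Set.mul_mem_mul (Or.inl hwF) hb₂) (by rw [map_mul]; exact he)
  exact hw ⟨b₃, hb₃, b₂⁻¹, Set.inv_mem_inv.2 hb₂, by simp [hb₃w]⟩

theorem reachWithin_compl_image [Finite Q] (hφ : Function.Surjective φ)
    (hS : Subgroup.closure S = ⊤) (h1B : 1 ∈ B) (hB : ∀ b ∈ B, ReachWithin (mulCayley S) B 1 b)
    (hinj : Set.InjOn φ ((F ∪ B) * B)) (hFB : F ⊆ Bᶜ)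
    (hesc : ∀ z ∈ (B * B⁻¹) \ B, z ∈ F ∧ ∃ w ∉ B * B⁻¹, ReachWithin (mulCayley S) F z w)
    {u v : Q} (hu : u ∉ φ '' B) (hv : v ∉ φ '' B) :
    ReachWithin (mulCayley (φ '' S)) (φ '' B)ᶜ u v := by
  have hS' : Subgroup.closure (φ '' S) = ⊤ := by
    rw [← MonoidHom.map_closure, hS, Subgroup.map_top_of_surjective φ hφ]
  refine reachWithin_compl_of_disjoint_smul (mulCayley_preconnected hS')
    (⟨1, h1B, map_one φ⟩ : (1 : Q) ∈ φ '' B) ?_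
    (fun u hu => exists_reachWithin_disjoint_smul_image hinj h1B hFB hesc hu) hu hv
  rintro _ ⟨b, hb, rfl⟩
  simpa using (hB b hb).map φ (fun _ _ => mulCayley_map_adj φ) (Set.mapsTo_image φ B)

end Projection

lemma eventually_injOn_mk {G : Type*} [Group G] {N : ℕ → Subgroup G}
    (hconv : (⋂ n : ℕ, ⋃ i : ℕ, ⋃ (_ : n ≤ i), ((N i : Set G))) = {1}) {K : Set G}
    (hK : K.Finite) : ∀ᶠ n in atTop, K.InjOn (QuotientGroup.mk : G → G ⧸ N n) := by
  have hev : ∀ g ∈ K⁻¹ * K, ∀ᶠ n in atTop, g ≠ 1 → g ∉ N n := by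
    intro g _
    by_cases hg : g = 1
    · exact Eventually.of_forall fun _ h => absurd hg h
    have hg' : g ∉ ⋂ n : ℕ, ⋃ i : ℕ, ⋃ (_ : n ≤ i), ((N i : Set G)) := by rw [hconv]; exact hg
    simp only [Set.mem_iInter, Set.mem_iUnion, not_forall, not_exists] at hg'
    obtain ⟨n, hn⟩ := hg'
    exact eventually_atTop.2 ⟨n, fun i hi _ => hn i hi⟩
  filter_upwards [(eventually_all_finite (hK.inv.mul hK)).2 hev] with n hn a ha b hb hab
  by_contra hne
  exact hn _ (Set.mul_mem_mul (Set.inv_mem_inv.2 ha) hb) (by rwa [Ne, inv_mul_eq_one])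
    (QuotientGroup.eq.1 hab)

theorem stmt11_general {G : Type*} [Group G] [Infinite G]
    (S : Finset G)
    (hSgen : Subgroup.closure (S : Set G) = ⊤)
    (N : ℕ → Subgroup G) (hnorm : ∀ n, (N n).Normal) (hfin : ∀ n, (N n).FiniteIndex)
    (hconv : (⋂ n : ℕ, ⋃ i : ℕ, ⋃ (_ : n ≤ i), ((N i : Set G))) = {1})
    (A : Finset G) :
    ∃ B : Finset G, A ⊆ B ∧ ∃ n₀ : ℕ, ∀ n ≥ n₀,
      ((QuotientGroup.mk '' (B : Set G))ᶜ : Set (G ⧸ N n)).Nonempty ∧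
      ((cayleyQuot (N n) S).induce
        ((QuotientGroup.mk '' (B : Set G))ᶜ : Set (G ⧸ N n))).Connected := by
  have hconn := mulCayley_preconnected hSgen
  obtain ⟨W, hWfin, hAW, h1W, hW⟩ := exists_finite_reachWithin_superset hconn 1 A.finite_toSet
  set B := fillFinite (mulCayley (S : Set G)) W
  have hBfin : B.Finite :=
    finite_fillFinite hconn (mulCayley_neighborSet_finite S.finite_toSet) hWfin ⟨1, h1W⟩
  have h1B : (1 : G) ∈ B := Or.inl h1W
  obtain ⟨g, hg⟩ := hBfin.infinite_compl.nonempty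
  have hZB : insert g ((B * B⁻¹) \ B) ⊆ Bᶜ := Set.insert_subset hg fun _ hz => hz.2
  obtain ⟨F, hFB, hFfin, hZF, hesc⟩ :=
    exists_finite_reachWithin_notMem (((hBfin.mul hBfin.inv).sdiff).insert g) hZB
      (hBfin.mul hBfin.inv) fun z hz => infinite_reachSet_compl_fillFinite (hZB hz)
  obtain ⟨n₀, hn₀⟩ := eventually_atTop.1 (eventually_injOn_mk hconv ((hFfin.union hBfin).mul hBfin))
  refine ⟨hBfin.toFinset, fun a ha => hBfin.mem_toFinset.2 (Or.inl (hAW ha)), n₀, fun n hn => ?_⟩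
  have := hnorm n
  have := hfin n
  rw [Set.Finite.coe_toFinset, cayleyQuot_eq_mulCayley, ← QuotientGroup.coe_mk']
  have hinj : Set.InjOn (QuotientGroup.mk' (N n)) ((F ∪ B) * B) := hn₀ n hn
  have hg' := notMem_image_of_injOn hinj h1B (hZF (Set.mem_insert g _)) hg
  refine ⟨⟨_, hg'⟩, induce_connected_of_reachWithin ⟨_, hg'⟩ fun u hu v hv => ?_⟩
  exact reachWithin_compl_image (QuotientGroup.mk'_surjective _) hSgen h1B
    (reachWithin_fillFinite hconn h1W hW) hinj hFB
    (fun z hz => ⟨hZF (Set.mem_insert_of_mem g hz), hesc z (Set.mem_insert_of_mem g hz)⟩) hu hv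

/-- For any finite `A ⊆ Γ` there is a finite `B ⊇ A` such that for all large `n`, the
complement of the image of `B` in `Γ/Γ_n` is nonempty and induces a connected subgraph
of the Cayley graph `C(Γ/Γ_n, π_n(S))`. -/
theorem stmt11 {G : Type*} [Group G] [Infinite G]
    (S : Finset G) (hS1 : (1 : G) ∉ S) (hSsymm : ∀ s ∈ S, s⁻¹ ∈ S)
    (hSgen : Subgroup.closure (S : Set G) = ⊤)
    (N : ℕ → Subgroup G) (hnorm : ∀ n, (N n).Normal) (hfin : ∀ n, (N n).FiniteIndex)
    (hconv : (⋂ n : ℕ, ⋃ i : ℕ, ⋃ (_ : n ≤ i), ((N i : Set G))) = {1})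
    (A : Finset G) :
    ∃ B : Finset G, A ⊆ B ∧ ∃ n₀ : ℕ, ∀ n ≥ n₀,
      ((QuotientGroup.mk '' (B : Set G))ᶜ : Set (G ⧸ N n)).Nonempty ∧
      ((cayleyQuot (N n) S).induce
        ((QuotientGroup.mk '' (B : Set G))ᶜ : Set (G ⧸ N n))).Connected :=
  stmt11_general S hSgen N hnorm hfin hconv A
end

section
/- Let Γ be a countable group, f ∈ ℝΓ well-balanced and g ∈ ℝΓ. Then there exists C > 0 such that for every finite-index normal subgroup N of Γ and every h : Γ/N → ℝ, if π_N(g) = h·π_N(f) in ℝ(Γ/N), then max_{c ∈ Γ/N} h(c) − min_{c ∈ Γ/N} h(c) ≤ C. -/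
/-!
Since `∑ f = 0`, the hypothesis says that `π_N(g)` is the Laplacian `Δh` of `h` on the Cayley
graph of `Γ/N` with edge weights `-f_s ≥ 0`. Summation by parts bounds the Dirichlet energy:
`E(h) = 2⟨h, Δh⟩ = 2⟨h - min h, π_N(g)⟩ ≤ 2 (max h - min h) ‖g‖₁`, so values of `h` at adjacent
vertices differ by at most `√(E(h) / w)`, where `w` is the least nonzero weight. By the maximum
principle, unless `h` is constant its maximum and minimum are attained at images of points `x`, `y`
of `supp g`, and `y⁻¹x` is a word of length at most `L` in `supp f`, with `L` depending only on
`supp g`. Hence `(max h - min h)² ≤ L² E(h) / w ≤ 2 L² (max h - min h) ‖g‖₁ / w`.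
-/

open scoped Classical

noncomputable section

def quotPushR {G : Type*} [Group G] (N : Subgroup G) (g : G → ℝ) : (G ⧸ N) → ℝ :=
  fun c => ∑ᶠ s : G, if (QuotientGroup.mk s : G ⧸ N) = c then g s else 0

open Function

theorem sum_mul_le_of_sum_eq_zero {ι : Type*} [Fintype ι] {u h : ι → ℝ} (hu : ∑ i, u i = 0)
    {m M : ℝ} (hm : ∀ i, m ≤ h i) (hM : ∀ i, h i ≤ M) :
    ∑ i, h i * u i ≤ (M - m) * ∑ i, |u i| :=
  calc ∑ i, h i * u i = ∑ i, (h i - m) * u i := by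
        simp only [sub_mul, Finset.sum_sub_distrib, ← Finset.mul_sum, hu, mul_zero, sub_zero]
    _ ≤ ∑ i, (M - m) * |u i| := Finset.sum_le_sum fun i _ =>
        (mul_le_mul_of_nonneg_left (le_abs_self _) (sub_nonneg.2 (hm i))).trans
          (mul_le_mul_of_nonneg_right (by linarith [hM i]) (abs_nonneg _))
    _ = (M - m) * ∑ i, |u i| := (Finset.mul_sum _ _ _).symm

theorem le_of_le_mul_sqrt {d L E w U : ℝ} (hd₀ : 0 ≤ d) (hd : d ≤ L * √(E / w)) (hE₀ : 0 ≤ E)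
    (hE : E ≤ 2 * (d * U)) (hw : 0 < w) (hU : 0 ≤ U) : d ≤ 2 * L ^ 2 / w * U := by
  have hsq : d ^ 2 ≤ d * (2 * L ^ 2 / w * U) :=
    calc d ^ 2 ≤ (L * √(E / w)) ^ 2 := pow_le_pow_left₀ hd₀ hd 2
      _ = L ^ 2 * E / w := by rw [mul_pow, Real.sq_sqrt (div_nonneg hE₀ hw.le)]; ring
      _ ≤ L ^ 2 * (2 * (d * U)) / w := by gcongr
      _ = d * (2 * L ^ 2 / w * U) := by ring
  have hK : 0 ≤ 2 * L ^ 2 / w * U := by positivity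
  nlinarith

section CayleyLaplacian

variable {G Q : Type*} [Group G] [Group Q] (π : G →* Q) (S : Finset G) (f : G → ℝ)

/-- The Laplacian of the Cayley graph of `Q` with respect to `π '' S`, with edge weights `-f`.
When `∑ s ∈ S, f s = 0` it is the convolution `h · π(f)`. -/
def cayleyLaplacian (h : Q → ℝ) (c : Q) : ℝ :=
  ∑ s ∈ S, f s * (h (c * (π s)⁻¹) - h c)

def dirichletEnergy [Fintype Q] (h : Q → ℝ) : ℝ :=
  ∑ c, ∑ s ∈ S, -f s * (h (c * (π s)⁻¹) - h c) ^ 2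

variable {S f}

theorem finsum_mul_eq_cayleyLaplacian (hS : support f ⊆ S) (hf : ∑ᶠ s, f s = 0) (h : Q → ℝ)
    (c : Q) : ∑ᶠ s, h (c * (π s)⁻¹) * f s = cayleyLaplacian π S f h c := by
  have hsum : ∑ s ∈ S, f s = 0 := by rwa [← finsum_eq_sum_of_support_subset f (by simpa using hS)]
  rw [finsum_eq_sum_of_support_subset _ ((support_mul_subset_right _ _).trans (by simpa using hS))]
  simp only [cayleyLaplacian, mul_sub, Finset.sum_sub_distrib, ← Finset.sum_mul, hsum, zero_mul,
    sub_zero]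
  exact Finset.sum_congr rfl fun s _ => mul_comm _ _

variable (S f)

theorem cayleyLaplacian_neg (h : Q → ℝ) :
    cayleyLaplacian π S f (-h) = -cayleyLaplacian π S f h := by
  ext c
  simp only [cayleyLaplacian, Pi.neg_apply, ← Finset.sum_neg_distrib]
  exact Finset.sum_congr rfl fun s _ => by ring

theorem eq_of_cayleyLaplacian_eq_zero (hf : ∀ s, s ≠ 1 → f s ≤ 0) {h : Q → ℝ} {c : Q}
    (hc : ∀ q, h q ≤ h c) (hL : cayleyLaplacian π S f h c = 0) {s : G} (hs : s ∈ S)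
    (hfs : f s ≠ 0) : h (c * (π s)⁻¹) = h c := by
  have hnonneg : ∀ t ∈ S, 0 ≤ f t * (h (c * (π t)⁻¹) - h c) := by
    intro t _
    rcases eq_or_ne t 1 with rfl | ht
    · simp
    · exact mul_nonneg_of_nonpos_of_nonpos (hf t ht) (sub_nonpos.2 (hc _))
  have hterm := (Finset.sum_eq_zero_iff_of_nonneg hnonneg).1 hL s hs
  exact sub_eq_zero.1 ((mul_eq_zero.1 hterm).resolve_left hfs)

theorem neg_mul_sq_sub_nonneg (hf : ∀ s, s ≠ 1 → f s ≤ 0) (h : Q → ℝ) (c : Q) (s : G) :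
    0 ≤ -f s * (h (c * (π s)⁻¹) - h c) ^ 2 := by
  rcases eq_or_ne s 1 with rfl | hs
  · simp
  · exact mul_nonneg (neg_nonneg.2 (hf s hs)) (sq_nonneg _)

variable [Fintype Q]

theorem sum_cayleyLaplacian (h : Q → ℝ) : ∑ c, cayleyLaplacian π S f h c = 0 := by
  simp only [cayleyLaplacian]
  rw [Finset.sum_comm]
  refine Finset.sum_eq_zero fun s _ => ?_
  rw [← Finset.mul_sum, Finset.sum_sub_distrib]
  exact mul_eq_zero_of_right _ (sub_eq_zero.2 (Equiv.sum_comp (Equiv.mulRight (π s)⁻¹) h))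

theorem two_mul_sum_mul_cayleyLaplacian (h : Q → ℝ) :
    2 * ∑ c, h c * cayleyLaplacian π S f h c = dirichletEnergy π S f h := by
  rw [← sub_eq_zero]
  calc 2 * ∑ c, h c * cayleyLaplacian π S f h c - dirichletEnergy π S f h
      = ∑ s ∈ S, f s * ∑ c, (h (c * (π s)⁻¹) ^ 2 - h c ^ 2) := by
        simp only [dirichletEnergy, cayleyLaplacian, Finset.mul_sum, ← Finset.sum_sub_distrib]
        rw [Finset.sum_comm]
        exact Finset.sum_congr rfl fun s _ => Finset.sum_congr rfl fun c _ => by ring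
    _ = 0 := Finset.sum_eq_zero fun s _ => by
        rw [Finset.sum_sub_distrib]
        exact mul_eq_zero_of_right _
          (sub_eq_zero.2 (Equiv.sum_comp (Equiv.mulRight (π s)⁻¹) (h · ^ 2)))

theorem dirichletEnergy_le {h : Q → ℝ} {m M : ℝ} (hm : ∀ c, m ≤ h c) (hM : ∀ c, h c ≤ M) :
    dirichletEnergy π S f h ≤ 2 * ((M - m) * ∑ c, |cayleyLaplacian π S f h c|) := by
  rw [← two_mul_sum_mul_cayleyLaplacian]
  gcongr
  exact sum_mul_le_of_sum_eq_zero (sum_cayleyLaplacian π S f h) hm hM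

theorem dirichletEnergy_nonneg (hf : ∀ s, s ≠ 1 → f s ≤ 0) (h : Q → ℝ) :
    0 ≤ dirichletEnergy π S f h :=
  Finset.sum_nonneg fun c _ => Finset.sum_nonneg fun s _ => neg_mul_sq_sub_nonneg π f hf h c s

theorem neg_mul_sq_le_dirichletEnergy (hf : ∀ s, s ≠ 1 → f s ≤ 0) (h : Q → ℝ) {s : G}
    (hs : s ∈ S) (c : Q) : -f s * (h (c * (π s)⁻¹) - h c) ^ 2 ≤ dirichletEnergy π S f h :=
  (Finset.single_le_sum (fun s _ => neg_mul_sq_sub_nonneg π f hf h c s) hs).trans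
    (Finset.single_le_sum (f := fun c => ∑ s ∈ S, -f s * (h (c * (π s)⁻¹) - h c) ^ 2)
      (fun c _ => Finset.sum_nonneg fun s _ => neg_mul_sq_sub_nonneg π f hf h c s)
      (Finset.mem_univ c))

end CayleyLaplacian

section WordMetric

variable {G X : Type*} [Group G] [PseudoMetricSpace X] {T : Set G}

theorem exists_dist_mul_le_of_mem_closure {z : G} (hz : z ∈ Subgroup.closure T) :
    ∃ n : ℕ, ∀ (H : G → X) (B : ℝ), (∀ a, ∀ t ∈ T, dist (H (a * t)) (H a) ≤ B) →
      ∀ a, dist (H (a * z)) (H a) ≤ n * B := by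
  induction hz using Subgroup.closure_induction with
  | mem t ht => exact ⟨1, fun H B hB a => by simpa using hB a t ht⟩
  | one => exact ⟨0, fun H B _ a => by simp⟩
  | mul x y _ _ hx hy =>
    obtain ⟨n, hn⟩ := hx
    obtain ⟨m, hm⟩ := hy
    refine ⟨n + m, fun H B hB a => ?_⟩
    calc dist (H (a * (x * y))) (H a)
        ≤ dist (H (a * x * y)) (H (a * x)) + dist (H (a * x)) (H a) := by
          rw [← mul_assoc]; exact dist_triangle _ _ _
      _ ≤ m * B + n * B := add_le_add (hm H B hB _) (hn H B hB a)
      _ = (n + m : ℕ) * B := by push_cast; ring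
  | inv x _ hx =>
    obtain ⟨n, hn⟩ := hx
    exact ⟨n, fun H B hB a => by simpa [dist_comm] using hn H B hB (a * x⁻¹)⟩

theorem Set.Finite.exists_dist_mul_le {Z : Set G} (hZ : Z.Finite)
    (hZT : Z ⊆ Subgroup.closure T) :
    ∃ L : ℕ, ∀ (H : G → X) (B : ℝ), 0 ≤ B → (∀ a, ∀ t ∈ T, dist (H (a * t)) (H a) ≤ B) →
      ∀ z ∈ Z, ∀ a, dist (H (a * z)) (H a) ≤ L * B := by
  have hn : ∀ z ∈ Z, ∃ n : ℕ, ∀ (H : G → X) (B : ℝ),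
      (∀ a, ∀ t ∈ T, dist (H (a * t)) (H a) ≤ B) → ∀ a, dist (H (a * z)) (H a) ≤ n * B :=
    fun z hz => exists_dist_mul_le_of_mem_closure (hZT hz)
  choose! n hn using hn
  refine ⟨hZ.toFinset.sup n, fun H B hB₀ hB z hz a => (hn z hz H B hB a).trans ?_⟩
  gcongr
  exact Finset.le_sup (hZ.mem_toFinset.2 hz)

end WordMetric

theorem exists_pos_forall_le_neg {G : Type*} [One G] {f : G → ℝ} (hfin : (support f).Finite)
    (hf : ∀ s, s ≠ 1 → f s ≤ 0) : ∃ w > 0, ∀ s, s ≠ 1 → f s ≠ 0 → w ≤ -f s := by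
  rcases Set.eq_empty_or_nonempty {s | s ≠ 1 ∧ f s ≠ 0} with hT | hT
  · exact ⟨1, one_pos, fun s hs hfs => (hT.subset ⟨hs, hfs⟩).elim⟩
  · obtain ⟨s₀, ⟨hs₀, hfs₀⟩, hmin⟩ :=
      Set.exists_min_image _ (fun s => -f s) (hfin.subset fun s hs => hs.2) hT
    exact ⟨-f s₀, neg_pos.2 ((hf s₀ hs₀).lt_of_ne hfs₀), fun s hs hfs => hmin s ⟨hs, hfs⟩⟩

section Quotient

variable {G Q : Type*} [Group G] [Group Q] {π : G →* Q} {S : Finset G} {f : G → ℝ}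

theorem dist_le_sqrt_dirichletEnergy [Fintype Q] (hf : ∀ s, s ≠ 1 → f s ≤ 0)
    (hS : support f ⊆ S) {w : ℝ} (hw : 0 < w) (hwf : ∀ s, s ≠ 1 → f s ≠ 0 → w ≤ -f s)
    (h : Q → ℝ) (a : G) {t : G} (ht : t ∈ support f) :
    dist (h (π (a * t))) (h (π a)) ≤ √(dirichletEnergy π S f h / w) := by
  rcases eq_or_ne t 1 with rfl | ht₁
  · simp
  rw [Real.dist_eq, ← Real.sqrt_sq_eq_abs]
  refine Real.sqrt_le_sqrt ((le_div_iff₀ hw).2 ?_)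
  have hE := neg_mul_sq_le_dirichletEnergy π S f hf h (hS ht) (π (a * t))
  rw [map_mul, mul_inv_cancel_right] at hE
  rw [map_mul]
  calc (h (π a * π t) - h (π a)) ^ 2 * w ≤ (h (π a * π t) - h (π a)) ^ 2 * -f t :=
        mul_le_mul_of_nonneg_left (hwf t ht₁ ht) (sq_nonneg _)
    _ = -f t * (h (π a) - h (π a * π t)) ^ 2 := by ring
    _ ≤ dirichletEnergy π S f h := hE

namespace WellBalancedR

theorem eq_of_forall_cayleyLaplacian_eq_zero (hf : WellBalancedR f) (hS : support f ⊆ S)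
    (hπ : Surjective π) {h : Q → ℝ} {c : Q} (hc : ∀ q, h q ≤ h c)
    (hL : ∀ q, h q = h c → cayleyLaplacian π S f h q = 0) (q : Q) : h q = h c := by
  obtain ⟨-, -, hsign, hsymm, hgen⟩ := hf
  have step : ∀ a s, f s ≠ 0 → h (π a) = h c → h (π (a * s⁻¹)) = h c := fun a s hfs ha => by
    rw [map_mul, map_inv,
      eq_of_cayleyLaplacian_eq_zero π S f hsign (ha ▸ hc) (hL _ ha) (hS hfs) hfs, ha]
  obtain ⟨a, rfl⟩ := hπ c
  obtain ⟨b, rfl⟩ := hπ q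
  have hb : a⁻¹ * b ∈ Subgroup.closure (support f) := hgen ▸ Subgroup.mem_top _
  simpa using Subgroup.closure_induction_right (p := fun x _ => h (π (a * x)) = h (π a))
    (by simp) (fun x _ s hs hx => by simpa [mul_assoc] using step (a * x) s⁻¹ (by rwa [hsymm]) hx)
    (fun x _ s hs hx => by simpa [mul_assoc] using step (a * x) s hs hx) hb

theorem eq_or_exists_forall_le (hf : WellBalancedR f) (hS : support f ⊆ S) [Finite Q]
    (hπ : Surjective π) {h : Q → ℝ} {Z : Set G}
    (hZ : ∀ q, cayleyLaplacian π S f h q ≠ 0 → q ∈ π '' Z) :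
    (∀ p q, h p = h q) ∨ ∃ x ∈ Z, ∀ q, h q ≤ h (π x) := by
  obtain ⟨c, hc⟩ := Finite.exists_max h
  by_cases hx : ∃ x ∈ Z, h (π x) = h c
  · obtain ⟨x, hxZ, hxc⟩ := hx
    exact Or.inr ⟨x, hxZ, fun q => hxc ▸ hc q⟩
  refine Or.inl fun p q => ?_
  have hL : ∀ q, h q = h c → cayleyLaplacian π S f h q = 0 := fun q hq => by
    by_contra hne
    obtain ⟨x, hxZ, rfl⟩ := hZ q hne
    exact hx ⟨x, hxZ, hq⟩
  rw [hf.eq_of_forall_cayleyLaplacian_eq_zero hS hπ hc hL p,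
    hf.eq_of_forall_cayleyLaplacian_eq_zero hS hπ hc hL q]

end WellBalancedR

end Quotient

theorem WellBalancedR.exists_sub_le_mul_sum_abs_cayleyLaplacian {G : Type*} [Group G]
    {f : G → ℝ} (hf : WellBalancedR f) {S : Finset G} (hS : support f ⊆ S) {Z : Set G}
    (hZ : Z.Finite) :
    ∃ K : ℝ, 0 ≤ K ∧ ∀ (Q : Type*) [Group Q] [Fintype Q] (π : G →* Q), Surjective π →
      ∀ h : Q → ℝ, (∀ q, cayleyLaplacian π S f h q ≠ 0 → q ∈ π '' Z) →
        ∀ p q, h p - h q ≤ K * ∑ c, |cayleyLaplacian π S f h c| := by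
  have ⟨hfin, _, hsign, _, hgen⟩ := hf
  obtain ⟨w, hw, hwf⟩ := exists_pos_forall_le_neg hfin hsign
  obtain ⟨L, hL⟩ := (hZ.inv.mul hZ).exists_dist_mul_le (X := ℝ)
    (fun z _ => hgen ▸ Subgroup.mem_top z)
  refine ⟨2 * L ^ 2 / w, by positivity, fun Q _ _ π hπ h hZh p q => ?_⟩
  set U := ∑ c, |cayleyLaplacian π S f h c|
  have hU : 0 ≤ U := Finset.sum_nonneg fun _ _ => abs_nonneg _
  rcases hf.eq_or_exists_forall_le hS hπ hZh with hconst | ⟨x, hxZ, hx⟩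
  · rw [hconst p q, sub_self]; positivity
  rcases hf.eq_or_exists_forall_le hS hπ (h := -h) (by simpa [cayleyLaplacian_neg] using hZh)
    with hconst | ⟨y, hyZ, hy⟩
  · rw [neg_inj.1 (hconst p q), sub_self]; positivity
  simp only [Pi.neg_apply, neg_le_neg_iff] at hy
  set E := dirichletEnergy π S f h
  have hE : E ≤ 2 * ((h (π x) - h (π y)) * U) := dirichletEnergy_le π S f hy hx
  have hd : h (π x) - h (π y) ≤ L * √(E / w) := by
    have := hL (h ∘ π) _ (Real.sqrt_nonneg _)
      (fun a t ht => dist_le_sqrt_dirichletEnergy hsign hS hw hwf h a ht) (y⁻¹ * x)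
      (Set.mul_mem_mul (Set.inv_mem_inv.2 hyZ) hxZ) y
    rw [mul_inv_cancel_left, Real.dist_eq] at this
    exact (le_abs_self _).trans this
  suffices h (π x) - h (π y) ≤ 2 * L ^ 2 / w * U by linarith [hx p, hy q]
  exact le_of_le_mul_sqrt (sub_nonneg.2 (hy _)) hd (dirichletEnergy_nonneg π S f hsign h) hE hw hU

section QuotPush

variable {G : Type*} [Group G] {N : Subgroup G} {g : G → ℝ}

theorem quotPushR_eq_sum {T : Finset G} (hT : support g ⊆ T) (c : G ⧸ N) :
    quotPushR N g c = ∑ s ∈ T, if (s : G ⧸ N) = c then g s else 0 :=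
  finsum_eq_sum_of_support_subset _ fun s hs => hT (by aesop)

theorem sum_abs_quotPushR_le [Fintype (G ⧸ N)] {T : Finset G} (hT : support g ⊆ T) :
    ∑ c, |quotPushR N g c| ≤ ∑ s ∈ T, |g s| :=
  calc ∑ c, |quotPushR N g c|
      ≤ ∑ c, ∑ s ∈ T, |if (s : G ⧸ N) = c then g s else 0| := by
        simp only [quotPushR_eq_sum hT]
        exact Finset.sum_le_sum fun c _ => Finset.abs_sum_le_sum_abs _ _
    _ = ∑ s ∈ T, |g s| := by
        rw [Finset.sum_comm]
        simp [apply_ite abs]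

theorem mem_image_of_quotPushR_ne_zero {c : G ⧸ N} (hc : quotPushR N g c ≠ 0) :
    c ∈ (↑) '' support g := by
  contrapose! hc
  refine finsum_eq_zero_of_forall_eq_zero fun s => ?_
  split_ifs with hs
  · exact not_not.1 fun hgs => hc ⟨s, hgs, hs⟩
  · rfl

end QuotPush

theorem stmt12_general {G : Type*} [Group G]
    (f : G → ℝ) (hf : WellBalancedR f)
    (g : G → ℝ) (hg : (Function.support g).Finite) :
    ∃ C : ℝ, 0 < C ∧
      ∀ (N : Subgroup G), N.Normal → N.FiniteIndex →
        ∀ h : (G ⧸ N) → ℝ,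
          (∀ a : G, quotPushR N g (QuotientGroup.mk a) =
            ∑ᶠ s : G, h (QuotientGroup.mk (a * s⁻¹)) * f s) →
          (⨆ c : G ⧸ N, h c) - (⨅ c : G ⧸ N, h c) ≤ C := by
  set S := hf.1.toFinset
  obtain ⟨K, hK, hosc⟩ :=
    hf.exists_sub_le_mul_sum_abs_cayleyLaplacian (S := S) (by simp [S]) hg
  refine ⟨K * ∑ s ∈ hg.toFinset, |g s| + 1, by positivity, fun N _ _ h hrel => ?_⟩
  have := Fintype.ofFinite (G ⧸ N)
  have hL : ∀ c, cayleyLaplacian (QuotientGroup.mk' N) S f h c = quotPushR N g c := by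
    intro c
    obtain ⟨a, rfl⟩ := QuotientGroup.mk_surjective c
    rw [← finsum_mul_eq_cayleyLaplacian _ (by simp [S]) hf.2.1, hrel a]
    rfl
  obtain ⟨p, hp⟩ := exists_eq_ciSup_of_finite (f := h)
  obtain ⟨q, hq⟩ := exists_eq_ciInf_of_finite (f := h)
  rw [← hp, ← hq]
  calc h p - h q ≤ K * ∑ c, |cayleyLaplacian (QuotientGroup.mk' N) S f h c| :=
        hosc _ _ (QuotientGroup.mk'_surjective N) h
          (fun c hc => mem_image_of_quotPushR_ne_zero (hL c ▸ hc)) p q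
    _ ≤ K * ∑ s ∈ hg.toFinset, |g s| := by
        simp only [hL]
        gcongr
        exact sum_abs_quotPushR_le (by simp)
    _ ≤ K * ∑ s ∈ hg.toFinset, |g s| + 1 := (lt_add_one _).le

/-- If `π_N(g) = h·π_N(f)` for some finite-index normal `N` and `h : Γ/N → ℝ`, then
`max h − min h ≤ C` for a constant `C` depending only on `f` and `g`.
(The convolution `h·π_N(f)` is written at a coset `aN` as `∑_{s∈Γ} h(as⁻¹N)·f_s`.) -/
theorem stmt12 {G : Type*} [Group G] [Countable G]
    (f : G → ℝ) (hf : WellBalancedR f)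
    (g : G → ℝ) (hg : (Function.support g).Finite) :
    ∃ C : ℝ, 0 < C ∧
      ∀ (N : Subgroup G), N.Normal → N.FiniteIndex →
        ∀ h : (G ⧸ N) → ℝ,
          (∀ a : G, quotPushR N g (QuotientGroup.mk a) =
            ∑ᶠ s : G, h (QuotientGroup.mk (a * s⁻¹)) * f s) →
          (⨆ c : G ⧸ N, h c) - (⨅ c : G ⧸ N, h c) ≤ C :=
  stmt12_general f hf g hg
end
end

section
/- Let Γ be a countable group and f ∈ ℤΓ well-balanced. Let x : Γ → ℝ be bounded with xf = 0, i.e. Σ_{s∈Γ} x_{ws⁻¹} f_s = 0 for every w ∈ Γ, and suppose there is a finite-index subgroup Γ' ≤ Γ such that x_{γt} = x_t for all γ ∈ Γ' and t ∈ Γ. Then x is constant. -/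
open Filter Topology

/-- `f ∈ ℤΓ` is well-balanced: finitely supported, coefficients sum to `0`,
nonpositive off the identity, symmetric, and with support generating `Γ`. -/
def WellBalancedZ {G : Type*} [Group G] (f : G → ℤ) : Prop :=
  (Function.support f).Finite ∧ (∑ᶠ s : G, f s) = 0 ∧
    (∀ s : G, s ≠ 1 → f s ≤ 0) ∧ (∀ s : G, f s⁻¹ = f s) ∧
    Subgroup.closure (Function.support f) = ⊤

/-!
A function periodic under a finite-index subgroup takes only finitely many values, so it attains
its maximum at some `w₀`. Since `f` has zero sum and is nonpositive off the identity, `xf = 0` says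
that `x w` is a weighted average of the values `x (w * s⁻¹)`, `s ∈ supp f`; at a maximum all of
these must therefore equal the maximum (maximum principle). The support of `f` is symmetric and
generates the group, so the maximum propagates from `w₀` to every element.
-/

section

variable {G : Type*} [Group G]

theorem exists_forall_le_of_forall_mul_eq {α : Type*} [LinearOrder α] (H : Subgroup G)
    [H.FiniteIndex] (x : G → α) (hx : ∀ γ ∈ H, ∀ t, x (γ * t) = x t) :
    ∃ w, ∀ t, x t ≤ x w := by
  have : Finite (Quotient (QuotientGroup.rightRel H)) :=
    Finite.of_equiv _ (QuotientGroup.quotientRightRelEquivQuotientLeftRel H).symm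
  let y : Quotient (QuotientGroup.rightRel H) → α := Quotient.lift x fun a b hab => by
    rw [← hx _ (QuotientGroup.rightRel_apply.mp hab) a, inv_mul_cancel_right]
  have : Nonempty (Quotient (QuotientGroup.rightRel H)) := ⟨⟦1⟧⟩
  obtain ⟨q, hq⟩ := Finite.exists_max y
  induction q using Quotient.inductionOn with
  | h w => exact ⟨w, fun t => hq ⟦t⟧⟩

theorem apply_mul_inv_eq_of_forall_le {f : G → ℝ} (hfin : (Function.support f).Finite)
    (hsum : ∑ᶠ s, f s = 0) (hnonpos : ∀ s, s ≠ 1 → f s ≤ 0) {x : G → ℝ} {w : G}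
    (hmax : ∀ t, x t ≤ x w) (hxf : ∑ᶠ s, x (w * s⁻¹) * f s = 0) {s : G} (hs : f s ≠ 0) :
    x (w * s⁻¹) = x w := by
  set T := hfin.toFinset
  have hsumT : ∑ s ∈ T, f s = 0 := by
    rwa [← finsum_eq_sum_of_support_subset f hfin.coe_toFinset.ge]
  have hxfT : ∑ s ∈ T, x (w * s⁻¹) * f s = 0 := by
    rwa [← finsum_eq_sum_of_support_subset _
      ((Function.support_mul_subset_right _ _).trans hfin.coe_toFinset.ge)]
  have hzero : ∑ s ∈ T, (x w - x (w * s⁻¹)) * f s = 0 := by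
    simp only [sub_mul, Finset.sum_sub_distrib, ← Finset.mul_sum, hsumT, hxfT, mul_zero, sub_zero]
  have hterm : ∀ s ∈ T, (x w - x (w * s⁻¹)) * f s ≤ 0 := by
    intro s _
    rcases eq_or_ne s 1 with rfl | hs1
    · simp
    · exact mul_nonpos_of_nonneg_of_nonpos (sub_nonneg.mpr (hmax _)) (hnonpos s hs1)
  have := (Finset.sum_eq_zero_iff_of_nonpos hterm).mp hzero s (hfin.mem_toFinset.mpr hs)
  exact (sub_eq_zero.mp ((mul_eq_zero.mp this).resolve_right hs)).symm

theorem mul_mem_of_closure_eq_top {S T : Set G} (hT : Subgroup.closure T = ⊤)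
    (hS : ∀ w ∈ S, ∀ s ∈ T, w * s ∈ S ∧ w * s⁻¹ ∈ S) {w : G} (hw : w ∈ S) (g : G) :
    w * g ∈ S := by
  have hg : g ∈ Subgroup.closure T := hT ▸ Subgroup.mem_top g
  induction hg using Subgroup.closure_induction'' generalizing w with
  | mem s hs => exact (hS w hw s hs).1
  | inv_mem s hs => exact (hS w hw s hs).2
  | one => rwa [mul_one]
  | mul a b _ _ ha hb => rw [← mul_assoc]; exact hb (ha hw)

end

theorem stmt15_general {G : Type*} [Group G]
    (f : G → ℤ) (hf : WellBalancedZ f)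
    (x : G → ℝ)
    (hxf : ∀ w : G, (∑ᶠ s : G, x (w * s⁻¹) * (f s : ℝ)) = 0)
    (Γ' : Subgroup G) (hfin : Γ'.FiniteIndex)
    (hper : ∀ γ ∈ Γ', ∀ t : G, x (γ * t) = x t) :
    ∃ c : ℝ, ∀ t : G, x t = c := by
  obtain ⟨hsupp, hsum, hnonpos, hsymm, hgen⟩ := hf
  obtain ⟨w₀, hw₀⟩ := exists_forall_le_of_forall_mul_eq Γ' x hper
  have hsupp' : (Function.support fun s => (f s : ℝ)).Finite := by
    simpa only [Function.support, Int.cast_ne_zero] using hsupp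
  have hsum' : ∑ᶠ s, (f s : ℝ) = 0 := by
    simpa [hsum] using (AddMonoidHom.map_finsum (Int.castAddHom ℝ) hsupp).symm
  have hnonpos' : ∀ s, s ≠ 1 → (f s : ℝ) ≤ 0 := fun s hs => Int.cast_nonpos.mpr (hnonpos s hs)
  have hstep : ∀ w, x w = x w₀ → ∀ s, f s ≠ 0 → x (w * s⁻¹) = x w₀ := fun w hw s hs =>
    (apply_mul_inv_eq_of_forall_le hsupp' hsum' hnonpos' (hw ▸ hw₀) (hxf w)
      (Int.cast_ne_zero.mpr hs)).trans hw
  have hmaxSet : ∀ w ∈ {w | x w = x w₀}, ∀ s ∈ Function.support f,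
      w * s ∈ {w | x w = x w₀} ∧ w * s⁻¹ ∈ {w | x w = x w₀} := fun w hw s hs =>
    ⟨by simpa using hstep w hw s⁻¹ (by rwa [hsymm]), hstep w hw s hs⟩
  refine ⟨x w₀, fun t => ?_⟩
  simpa using mul_mem_of_closure_eq_top hgen hmaxSet (w := w₀) rfl (w₀⁻¹ * t)

theorem stmt15 {G : Type*} [Group G] [Countable G]
    (f : G → ℤ) (hf : WellBalancedZ f)
    (x : G → ℝ) (hbd : ∃ M : ℝ, ∀ s : G, |x s| ≤ M)
    (hxf : ∀ w : G, (∑ᶠ s : G, x (w * s⁻¹) * (f s : ℝ)) = 0)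
    (Γ' : Subgroup G) (hfin : Γ'.FiniteIndex)
    (hper : ∀ γ ∈ Γ', ∀ t : G, x (γ * t) = x t) :
    ∃ c : ℝ, ∀ t : G, x t = c :=
  stmt15_general f hf x hxf Γ' hfin hper
end

section
/- Let Γ be a countable group and f ∈ ℤΓ well-balanced. Then there exists C > 0 such that for every finite-index subgroup Γ' ≤ Γ and every x ∈ X_f with x_{γt} = x_t for all γ ∈ Γ', t ∈ Γ: if ‖x_s‖ < C for every s ∈ Γ (where ‖·‖ denotes the distance to 0 in ℝ/ℤ, i.e. ‖t + ℤ‖ = min_{m∈ℤ} |t − m|), then x is constant. -/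
open Filter Topology

/-!
Lift `x` to a real function `r` with `|r t| = ‖x t‖ < 1 / (N + 1)`, where `N = ∑ |f s|`. Each
`∑ f s * r (t * s)` is then an integer of absolute value `< 1`, hence `0`: `r` is `f`-harmonic.
Invariance under the finite-index subgroup `Γ'` leaves `r` only finitely many values, so it attains
its maximum; as `f s ≤ 0` off the identity and `∑ f s = 0`, a maximum at `t` is also attained at
`t * s` for every `s` in the support of `f`, which is symmetric and generates `G`.
-/

theorem UnitAddCircle.exists_abs_eq_norm (u : UnitAddCircle) :
    ∃ r : ℝ, (r : UnitAddCircle) = u ∧ |r| = ‖u‖ := by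
  induction u using QuotientAddGroup.induction_on with
  | H y =>
    refine ⟨y - round y, ?_, UnitAddCircle.norm_eq.symm⟩
    rw [AddCircle.coe_sub, sub_eq_self, AddCircle.coe_eq_zero_iff]
    exact ⟨round y, by simp⟩

theorem UnitAddCircle.eq_zero_of_coe_eq_zero {y : ℝ} (h : (y : UnitAddCircle) = 0) (hy : |y| < 1) :
    y = 0 := by
  obtain ⟨n, rfl⟩ := (AddCircle.coe_eq_zero_iff 1).mp h
  have hn : |(n : ℝ)| < 1 := by simpa using hy
  have : n = 0 := by simpa using (by exact_mod_cast hn : |n| < 1)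
  simp [this]

section

variable {G : Type*} [Group G]

theorem Subgroup.exists_forall_le_of_forall_mul_left_eq {α : Type*} [LinearOrder α]
    (H : Subgroup G) [H.FiniteIndex] (r : G → α) (hr : ∀ h ∈ H, ∀ t, r (h * t) = r t) :
    ∃ t₀, ∀ t, r t ≤ r t₀ := by
  obtain ⟨q₀, hq₀⟩ := Finite.exists_max fun q : G ⧸ H => r q.out⁻¹
  refine ⟨q₀.out⁻¹, fun t => ?_⟩
  -- `r` is constant on right cosets `H * t`, and `t ↦ t⁻¹` turns them into the left cosets
  set o := ((t⁻¹ : G) : G ⧸ H).out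
  have hmem : t * o ∈ H := by
    simpa using QuotientGroup.eq.mp (QuotientGroup.out_eq' ((t⁻¹ : G) : G ⧸ H)).symm
  calc r t = r ((t * o)⁻¹ * t) := (hr _ (inv_mem hmem) t).symm
    _ = r o⁻¹ := by group
    _ ≤ r q₀.out⁻¹ := hq₀ _

theorem sum_mul_eq_zero_of_mem_XfSet {f : G → ℤ} {T : Finset G}
    (hT : Function.support f ⊆ T) {x : G → UnitAddCircle} (hx : x ∈ XfSet f)
    {r : G → ℝ} (hrx : ∀ t, (r t : UnitAddCircle) = x t) {C : ℝ} (hrC : ∀ t, |r t| < C)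
    (hC : (∑ s ∈ T, |(f s : ℝ)|) * C < 1) (t : G) :
    ∑ s ∈ T, (f s : ℝ) * r (t * s) = 0 := by
  apply UnitAddCircle.eq_zero_of_coe_eq_zero
  · have hsupp : Function.support (fun s => f s • x (t * s)) ⊆ T :=
      (Function.support_smul_subset_left _ _).trans hT
    rw [← hx t, finsum_eq_sum_of_support_subset _ hsupp, ← QuotientAddGroup.mk'_apply, map_sum]
    simp [← zsmul_eq_mul, hrx]
  · calc |∑ s ∈ T, (f s : ℝ) * r (t * s)|
        ≤ ∑ s ∈ T, |(f s : ℝ)| * |r (t * s)| := by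
          simpa only [abs_mul] using Finset.abs_sum_le_sum_abs (fun s => (f s : ℝ) * r (t * s)) T
      _ ≤ ∑ s ∈ T, |(f s : ℝ)| * C := by gcongr with s; exact (hrC _).le
      _ < 1 := by rwa [← Finset.sum_mul]

section MaximumPrinciple

variable {w : G → ℝ} {T : Finset G} {r : G → ℝ}

theorem mul_eq_of_forall_le_of_sum_mul_eq_zero (hT : Function.support w ⊆ T)
    (hsum : ∑ s ∈ T, w s = 0) (hw : ∀ s, s ≠ 1 → w s ≤ 0) {t : G}
    (hharm : ∑ s ∈ T, w s * r (t * s) = 0)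
    (hmax : ∀ u, r u ≤ r t) {s : G} (hs : w s ≠ 0) : r (t * s) = r t := by
  have hzero : ∑ s ∈ T, w s * (r t - r (t * s)) = 0 := by
    simp only [mul_sub, Finset.sum_sub_distrib, ← Finset.sum_mul, hsum, hharm, zero_mul, sub_zero]
  have hnonpos : ∀ s ∈ T, w s * (r t - r (t * s)) ≤ 0 := by
    intro s _
    rcases eq_or_ne s 1 with rfl | hs1
    · simp
    · exact mul_nonpos_of_nonpos_of_nonneg (hw s hs1) (sub_nonneg.mpr (hmax _))
  have := (Finset.sum_eq_zero_iff_of_nonpos hnonpos).mp hzero s (hT hs)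
  linarith [(mul_eq_zero.mp this).resolve_left hs]

theorem forall_eq_of_forall_le_of_sum_mul_eq_zero (hT : Function.support w ⊆ T)
    (hsum : ∑ s ∈ T, w s = 0) (hw : ∀ s, s ≠ 1 → w s ≤ 0) (hsymm : ∀ s, w s⁻¹ = w s)
    (hgen : Subgroup.closure (Function.support w) = ⊤)
    (hharm : ∀ t, ∑ s ∈ T, w s * r (t * s) = 0) {t₀ : G} (hmax : ∀ u, r u ≤ r t₀) (u : G) :
    r u = r t₀ := by
  have step : ∀ t, r t = r t₀ → ∀ s, w s ≠ 0 → r (t * s) = r t₀ := fun t ht s hs =>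
    ht ▸ mul_eq_of_forall_le_of_sum_mul_eq_zero hT hsum hw (hharm t) (ht ▸ hmax) hs
  have hu : t₀⁻¹ * u ∈ Subgroup.closure (Function.support w) := hgen ▸ Subgroup.mem_top _
  simpa using Subgroup.closure_induction_right (p := fun g _ => r (t₀ * g) = r t₀) (by simp)
    (fun g _ s hs hg => mul_assoc t₀ g s ▸ step _ hg s hs)
    (fun g _ s hs hg => mul_assoc t₀ g s⁻¹ ▸ step _ hg s⁻¹ (by rwa [hsymm])) hu

end MaximumPrinciple

end

theorem stmt16_general {G : Type*} [Group G]
    (f : G → ℤ) (hf : WellBalancedZ f) :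
    ∃ C : ℝ, 0 < C ∧
      ∀ (Γ' : Subgroup G), Γ'.FiniteIndex →
        ∀ x ∈ XfSet f, (∀ γ ∈ Γ', ∀ t : G, x (γ * t) = x t) →
          (∀ s : G, ‖x s‖ < C) → ∃ c : UnitAddCircle, ∀ t : G, x t = c := by
  obtain ⟨hfin, hsum, hneg, hsymm, hgen⟩ := hf
  set T := hfin.toFinset
  have hT : Function.support f ⊆ T := hfin.coe_toFinset.symm.subset
  set N := ∑ s ∈ T, |(f s : ℝ)|
  have hN : 0 ≤ N := Finset.sum_nonneg fun _ _ => abs_nonneg _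
  refine ⟨1 / (N + 1), by positivity, fun Γ' _ x hx hinv hsmall => ?_⟩
  choose lift coe_lift abs_lift using UnitAddCircle.exists_abs_eq_norm
  set r := fun t => lift (x t)
  have hharm : ∀ t, ∑ s ∈ T, (f s : ℝ) * r (t * s) = 0 :=
    sum_mul_eq_zero_of_mem_XfSet hT hx (fun t => coe_lift _)
      (fun t => (abs_lift _).trans_lt (hsmall t))
      (by rw [mul_one_div, div_lt_one (by positivity)]; linarith)
  obtain ⟨t₀, ht₀⟩ := Γ'.exists_forall_le_of_forall_mul_left_eq r
    fun γ hγ t => congrArg lift (hinv γ hγ t)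
  have hsum' : ∑ s ∈ T, (f s : ℝ) = 0 := by
    exact_mod_cast (finsum_eq_sum_of_support_subset f hT).symm.trans hsum
  have hsupp : Function.support (fun s => (f s : ℝ)) = Function.support f := by ext; simp
  refine ⟨x t₀, fun t => ?_⟩
  rw [← coe_lift (x t), ← coe_lift (x t₀)]
  exact congrArg _ <| forall_eq_of_forall_le_of_sum_mul_eq_zero (w := fun s => (f s : ℝ))
    (hsupp ▸ hT) hsum' (fun s hs => by exact_mod_cast hneg s hs)
    (fun s => by simp [hsymm]) (hsupp ▸ hgen) hharm ht₀ t

/-- There is `C > 0` such that every point of `X_f` fixed by a finite-index subgroup and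
with all coordinates at distance `< C` from `0` in `ℝ/ℤ` is constant. -/
theorem stmt16 {G : Type*} [Group G] [Countable G]
    (f : G → ℤ) (hf : WellBalancedZ f) :
    ∃ C : ℝ, 0 < C ∧
      ∀ (Γ' : Subgroup G), Γ'.FiniteIndex →
        ∀ x ∈ XfSet f, (∀ γ ∈ Γ', ∀ t : G, x (γ * t) = x t) →
          (∀ s : G, ‖x s‖ < C) → ∃ c : UnitAddCircle, ∀ t : G, x t = c :=
  stmt16_general f hf
end

section
/- Let Γ be a countable group and f ∈ ℝΓ well-balanced. Then f has no left inverse in ℓ¹(Γ): there is no summable function g : Γ → ℝ (Σ_{s∈Γ} |g_s| < ∞) such that for every w ∈ Γ, Σ_{s∈Γ} g_{ws⁻¹} f_s equals 1 if w = e and 0 otherwise. Likewise there is no summable h : Γ → ℝ with, for every w ∈ Γ, Σ_{s∈Γ} f_s h_{s⁻¹w} equal to 1 if w = e and 0 otherwise. In particular f is not invertible in the convolution Banach algebra ℓ¹(Γ). -/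
open Filter Topology
open scoped Classical

/-!
Summing over `Γ` is multiplicative for convolutions of an `ℓ¹` function with a finitely
supported one: `∑ (g * f) = (∑ g) (∑ f)`. A well-balanced `f` has `∑ f = 0`, whereas `∑ δ_e = 1`,
so neither `g * f` nor `f * h` can equal `δ_e`.
-/

section Convolution

variable {G R : Type*} [Group G] [NonUnitalNonAssocSemiring R] [TopologicalSpace R]
  [IsTopologicalSemiring R] [T2Space R]

theorem tsum_finsum_mul_mul_inv {g f : G → R} (hg : Summable g) (hf : f.support.Finite) :
    ∑' w, ∑ᶠ s, g (w * s⁻¹) * f s = (∑' w, g w) * ∑ᶠ s, f s := by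
  have hsupp (w : G) : (fun s => g (w * s⁻¹) * f s).support ⊆ hf.toFinset := by
    intro s hs
    simpa using right_ne_zero_of_mul hs
  have hshift (s : G) : Summable fun w => g (w * s⁻¹) := (Equiv.mulRight s⁻¹).summable_iff.mpr hg
  simp_rw [finsum_eq_sum_of_support_subset _ (hsupp _), finsum_eq_sum f hf, Finset.mul_sum]
  rw [Summable.tsum_finsetSum fun s _ => (hshift s).mul_right (f s)]
  refine Finset.sum_congr rfl fun s _ => ?_
  rw [(hshift s).tsum_mul_right]
  exact congrArg (· * f s) ((Equiv.mulRight s⁻¹).tsum_eq g)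

theorem tsum_finsum_mul_inv_mul {f h : G → R} (hf : f.support.Finite) (hh : Summable h) :
    ∑' w, ∑ᶠ s, f s * h (s⁻¹ * w) = (∑ᶠ s, f s) * ∑' w, h w := by
  have hsupp (w : G) : (fun s => f s * h (s⁻¹ * w)).support ⊆ hf.toFinset := by
    intro s hs
    simpa using left_ne_zero_of_mul hs
  have hshift (s : G) : Summable fun w => h (s⁻¹ * w) := (Equiv.mulLeft s⁻¹).summable_iff.mpr hh
  simp_rw [finsum_eq_sum_of_support_subset _ (hsupp _), finsum_eq_sum f hf, Finset.sum_mul]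
  rw [Summable.tsum_finsetSum fun s _ => (hshift s).mul_left (f s)]
  refine Finset.sum_congr rfl fun s _ => ?_
  rw [(hshift s).tsum_mul_left]
  exact congrArg (f s * ·) ((Equiv.mulLeft s⁻¹).tsum_eq h)

end Convolution

theorem stmt19_general {G : Type*} [Group G]
    (f : G → ℝ) (hf : WellBalancedR f) :
    (¬ ∃ g : G → ℝ, Summable (fun s : G => |g s|) ∧
        ∀ w : G, (∑ᶠ s : G, g (w * s⁻¹) * f s) = if w = 1 then 1 else 0) ∧
    (¬ ∃ h : G → ℝ, Summable (fun s : G => |h s|) ∧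
        ∀ w : G, (∑ᶠ s : G, f s * h (s⁻¹ * w)) = if w = 1 then 1 else 0) := by
  obtain ⟨hfin, hsum, -⟩ := hf
  constructor
  · rintro ⟨g, hg, hconv⟩
    have := tsum_finsum_mul_mul_inv hg.of_abs hfin
    simp only [hconv, tsum_ite_eq, hsum, mul_zero] at this
    exact one_ne_zero this
  · rintro ⟨h, hh, hconv⟩
    have := tsum_finsum_mul_inv_mul hfin hh.of_abs
    simp only [hconv, tsum_ite_eq, hsum, zero_mul] at this
    exact one_ne_zero this

/-- A well-balanced `f` has no left and no right inverse in `ℓ¹(Γ)`; in particular it is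
not invertible in the convolution Banach algebra `ℓ¹(Γ)`.  (In each convolution below the
sum runs over the support of `f` and hence has only finitely many nonzero terms.) -/
theorem stmt19 {G : Type*} [Group G] [Countable G]
    (f : G → ℝ) (hf : WellBalancedR f) :
    (¬ ∃ g : G → ℝ, Summable (fun s : G => |g s|) ∧
        ∀ w : G, (∑ᶠ s : G, g (w * s⁻¹) * f s) = if w = 1 then 1 else 0) ∧
    (¬ ∃ h : G → ℝ, Summable (fun s : G => |h s|) ∧
        ∀ w : G, (∑ᶠ s : G, f s * h (s⁻¹ * w)) = if w = 1 then 1 else 0) :=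
  stmt19_general f hf
end
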